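/- arXiv:0902.2159 — 6 statements merged into one kernel-verified Lean document; each statement's English description precedes it below -/
import Mathlib

section
/- The ghost-surpassing relation is antisymmetric: in any supertropical semiring, if a ghost-surpasses b and b ghost-surpasses a, then a = b. -/
/-- A supertropical semiring: a semiring with a ghost ideal `isGhost`,
whose ghost map `ν a = a + a` is an idempotent map into the ghost ideal,
satisfying the supertropical axioms. -/
class SupertropicalSemiring (R : Type*) extends Semiring R where
  isGhost : R → Prop
  ghost_zero : isGhost 0
  ghost_add : ∀ {a b : R}, isGhost a → isGhost b → isGhost (a + b)
  ghost_mul_left : ∀ (a : R) {b : R}, isGhost b → isGhost (a * b)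
  ghost_mul_right : ∀ (a : R) {b : R}, isGhost b → isGhost (b * a)
  nu_ghost : ∀ a : R, isGhost (a + a)
  nu_idem : ∀ a : R, (a + a) + (a + a) = a + a
  add_eq_nu : ∀ {a b : R}, a + a = b + b → a + b = a + a
  add_cases : ∀ {a b : R}, a + a ≠ b + b → a + b = a ∨ a + b = b

namespace ST

variable {R : Type*}

/-- The ghost predicate. -/
abbrev ghost [SupertropicalSemiring R] (a : R) : Prop := SupertropicalSemiring.isGhost a

/-- `a` is tangible if it is not a ghost (in particular `a ≠ 0`). -/
abbrev tangible [SupertropicalSemiring R] (a : R) : Prop := ¬ ghost a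

/-- `a` lies in `T₀ = T ∪ {0}`. -/
abbrev tangible0 [SupertropicalSemiring R] (a : R) : Prop := a = 0 ∨ tangible a

/-- `b` ghost-surpasses `a`: `b = a + ghost`. -/
def GS [SupertropicalSemiring R] (b a : R) : Prop := ∃ c : R, ghost c ∧ b = a + c

/-- `a` and `b` are ν-matched: `ν a = ν b`. -/
def nuEq [SupertropicalSemiring R] (a b : R) : Prop := a + a = b + b

/-- `a ≤_ν b`, i.e. `ν a ≤ ν b` in the ordered ghost ideal. -/
def nuLe [SupertropicalSemiring R] (a b : R) : Prop := (a + a) + (b + b) = b + b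

end ST

/-- A supertropical domain: a commutative supertropical semiring in which the
tangible elements form a multiplicative monoid and `ν` maps the tangibles onto
the nonzero ghosts. -/
class SupertropicalDomain (R : Type*) extends SupertropicalSemiring R where
  mul_comm : ∀ a b : R, a * b = b * a
  one_tangible : ¬ isGhost 1
  tangible_mul : ∀ {a b : R}, ¬ isGhost a → ¬ isGhost b → ¬ isGhost (a * b)
  nu_onto : ∀ {g : R}, isGhost g → g ≠ 0 → ∃ t : R, ¬ isGhost t ∧ t + t = g

/-- A supertropical semifield: every tangible element is invertible. -/
class SupertropicalSemifield (R : Type*) extends SupertropicalDomain R where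
  tangible_inv : ∀ {a : R}, ¬ isGhost a → ∃ b : R, ¬ isGhost b ∧ a * b = 1

namespace ST

/-- A tangible retract function `ν̂ : R → T₀`: the identity on `T₀`, and a
section of `ν` on the ghost ideal. -/
structure TangibleRetract (R : Type*) [SupertropicalSemiring R] where
  toFun : R → R
  mem_T0 : ∀ a : R, tangible0 (toFun a)
  id_on_T0 : ∀ a : R, tangible0 a → toFun a = a
  nu_section : ∀ a : R, ghost a → toFun a + toFun a = a

instance (R : Type*) [SupertropicalSemiring R] :
    CoeFun (TangibleRetract R) (fun _ => R → R) := ⟨TangibleRetract.toFun⟩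

/-- The supertropical determinant (permanent) of a square matrix. -/
def per [Semiring R] {n : ℕ} (A : Matrix (Fin n) (Fin n) R) : R :=
  ∑ σ : Equiv.Perm (Fin n), (List.ofFn fun i => A i (σ i)).prod

/-- The supertropical adjoint: the transpose of the matrix of permanental
minors, `adj A i j = |A_{j,i}|`. -/
def adj [Semiring R] {n : ℕ} (A : Matrix (Fin (n + 1)) (Fin (n + 1)) R) :
    Matrix (Fin (n + 1)) (Fin (n + 1)) R :=
  fun i j => per (A.submatrix j.succAbove i.succAbove)

end ST

/-- The ghost-surpassing relation is antisymmetric in any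
supertropical semiring. -/
theorem gs_antisymm {R : Type*} [SupertropicalSemiring R] (a b : R)
    (h1 : ST.GS a b) (h2 : ST.GS b a) : a = b := by
  obtain ⟨c, hc, hac⟩ := h1
  obtain ⟨d, hd, hbd⟩ := h2
  have hA : a + a = (b + b) + (c + c) := by rw [hac]; exact add_add_add_comm b c b c
  have hB : b + b = (a + a) + (d + d) := by rw [hbd]; exact add_add_add_comm a d a d
  have h1' : (a + a) + (b + b) = a + a := by
    rw [hA, add_right_comm, SupertropicalSemiring.nu_idem]
  have h2' : (b + b) + (a + a) = b + b := by
    rw [hB, add_right_comm, SupertropicalSemiring.nu_idem]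
  have hnu : a + a = b + b := by rw [← h1', add_comm, h2']
  by_cases hcb : b + b = c + c
  · -- then a = b + c = ν b
    have ha' : a = b + b := by rw [hac, SupertropicalSemiring.add_eq_nu hcb]
    by_cases hda : a + a = d + d
    · have hb' : b = a + a := by rw [hbd, SupertropicalSemiring.add_eq_nu hda]
      rw [ha', ← hnu, ← hb']
    · rcases SupertropicalSemiring.add_cases hda with h | h
      · rw [hbd, h]
      · exfalso
        apply hda
        rw [hnu, hbd, h]
  · rcases SupertropicalSemiring.add_cases hcb with h | h
    · rw [hac, h]
    · exfalso
      apply hcb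
      rw [← hnu, hac, h]
end

section
/- Let R be a supertropical domain with tangible retract ν̂. If for each j = 1,...,m the sum Σ_k a_k ν̂(b_{j,k}) is a ghost, then for any elements c_1,...,c_m ∈ R, the sum Σ_k a_k ν̂(Σ_{j=1}^m b_{j,k} c_j) is also a ghost. -/
section STAuxProof

open ST SupertropicalSemiring

variable {R : Type*} [SupertropicalDomain R]

lemma ghost_idem' {g : R} (hg : ST.ghost g) : g + g = g := by
  by_cases h0 : g = 0
  · simp [h0]
  · obtain ⟨t, _, ht⟩ := SupertropicalDomain.nu_onto hg h0
    rw [← ht]; exact SupertropicalSemiring.nu_idem t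

lemma nu_ghost' (a : R) : ST.ghost (a + a) := SupertropicalSemiring.nu_ghost a

lemma nu_add' (a b : R) : (a + b) + (a + b) = (a + a) + (b + b) := by
  rw [add_assoc, ← add_assoc b a b, add_comm b a, add_assoc a b b, ← add_assoc]

lemma nu_mul' (a b : R) : (a * b) + (a * b) = (a + a) * (b + b) := by
  rw [mul_add, add_mul]
  exact (ghost_idem' (nu_ghost' (a * b))).symm

lemma nu_eq_zero' {a : R} (h : a + a = 0) : a = 0 := by
  have h2 : a + a = (0 : R) + 0 := by simpa using h
  have h3 := SupertropicalSemiring.add_eq_nu h2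
  simpa [h] using h3

lemma ghost_total' {g h : R} (hg : ST.ghost g) (hh : ST.ghost h) :
    g + h = g ∨ g + h = h := by
  by_cases he : g + g = h + h
  · left
    have h1 := SupertropicalSemiring.add_eq_nu he
    rw [h1, ghost_idem' hg]
  · exact SupertropicalSemiring.add_cases he

lemma tri' (a b : R) : a + b = a ∨ a + b = b ∨ ST.ghost (a + b) := by
  by_cases he : a + a = b + b
  · right; right
    rw [SupertropicalSemiring.add_eq_nu he]; exact nu_ghost' a
  · rcases SupertropicalSemiring.add_cases he with h | h
    · left; exact h
    · right; left; exact h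

lemma nu_f' (f : ST.TangibleRetract R) (a : R) : f a + f a = a + a := by
  by_cases hg : ST.ghost a
  · rw [f.nu_section a hg, ghost_idem' hg]
  · rw [f.id_on_T0 a (Or.inr hg)]

lemma ghost_sum' {ι : Type*} (s : Finset ι) (x : ι → R)
    (h : ∀ i ∈ s, ST.ghost (x i)) : ST.ghost (∑ i ∈ s, x i) :=
  Finset.sum_induction x ST.ghost (fun _ _ => SupertropicalSemiring.ghost_add)
    SupertropicalSemiring.ghost_zero h

lemma ghost_sum_pick' {ι : Type*} (s : Finset ι) (x : ι → R)
    (h : ∀ i ∈ s, ST.ghost (x i)) :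
    (∑ i ∈ s, x i) = 0 ∨ ∃ i ∈ s, (∑ i ∈ s, x i) = x i := by
  classical
  induction s using Finset.induction_on with
  | empty => left; simp
  | @insert a s ha ih =>
    rw [Finset.sum_insert ha]
    have hs : ∀ i ∈ s, ST.ghost (x i) := fun i hi => h i (Finset.mem_insert_of_mem hi)
    rcases ih hs with h0 | ⟨i, hi, hxi⟩
    · rw [h0, add_zero]
      exact Or.inr ⟨a, Finset.mem_insert_self a s, rfl⟩
    · rw [hxi]
      rcases ghost_total' (h a (Finset.mem_insert_self a s)) (hs i hi) with hc | hc
      · exact Or.inr ⟨a, Finset.mem_insert_self a s, hc⟩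
      · exact Or.inr ⟨i, Finset.mem_insert_of_mem hi, hc⟩

lemma sum_dom' {ι : Type*} (s : Finset ι) (x : ι → R) :
    ST.ghost (∑ i ∈ s, x i) ∨ ∃ i ∈ s, (∑ i ∈ s, x i) = x i := by
  classical
  induction s using Finset.induction_on with
  | empty => left; simpa using SupertropicalSemiring.ghost_zero
  | @insert a s ha ih =>
    rw [Finset.sum_insert ha]
    rcases tri' (x a) (∑ i ∈ s, x i) with h | h | h
    · exact Or.inr ⟨a, Finset.mem_insert_self a s, h⟩
    · rw [h]
      rcases ih with hg | ⟨i, hi, hxi⟩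
      · exact Or.inl hg
      · exact Or.inr ⟨i, Finset.mem_insert_of_mem hi, hxi⟩
    · exact Or.inl h

lemma add_absorb' {g x : R} (hg : ST.ghost g) (hle : (x + x) + g = g) :
    g + x = g := by
  by_cases he : x + x = g + g
  · have h1 : x + g = x + x := SupertropicalSemiring.add_eq_nu he
    rw [add_comm g x, h1, he, ghost_idem' hg]
  · rcases SupertropicalSemiring.add_cases (a := g) (b := x)
      (fun hc => he hc.symm) with h | h
    · exact h
    · exfalso
      have h1 : (g + x) + (g + x) = (g + g) + (x + x) := nu_add' g x
      rw [h, ghost_idem' hg, add_comm g (x + x), hle] at h1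
      exact he (by rw [h1, ghost_idem' hg])

lemma ghost_add_dominated' {ι : Type*} (s : Finset ι) (x : ι → R) {g : R}
    (hg : ST.ghost g) (h : ∀ i ∈ s, (x i + x i) + g = g) :
    g + ∑ i ∈ s, x i = g := by
  classical
  induction s using Finset.induction_on with
  | empty => simp
  | @insert a s ha ih =>
    rw [Finset.sum_insert ha, ← add_assoc,
      add_absorb' hg (h a (Finset.mem_insert_self a s))]
    exact ih (fun i hi => h i (Finset.mem_insert_of_mem hi))

lemma ghost_term_le' {ι : Type*} [DecidableEq ι] (s : Finset ι) (x : ι → R)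
    (hgh : ∀ i ∈ s, ST.ghost (x i)) {i : ι} (hi : i ∈ s) :
    x i + ∑ j ∈ s, x j = ∑ j ∈ s, x j := by
  rw [← Finset.add_sum_erase s x hi, ← add_assoc, ghost_idem' (hgh i hi)]

lemma tie_ghost' {ι : Type*} [DecidableEq ι] (s : Finset ι) (x : ι → R)
    {i0 i1 : ι} (h0 : i0 ∈ s) (h1 : i1 ∈ s) (hne : i1 ≠ i0)
    (hS : (∑ i ∈ s, x i) = x i0) (ht : x i1 + x i1 = x i0 + x i0) :
    ST.ghost (∑ i ∈ s, x i) := by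
  have hsum : (∑ j ∈ s, x j) + (∑ j ∈ s, x j) = ∑ j ∈ s, (x j + x j) :=
    Finset.sum_add_distrib.symm
  have h3 : x i0 + x i0 = ∑ j ∈ s, (x j + x j) := by rw [← hS, hsum]
  have key : ∀ i ∈ s, (x i + x i) + (x i0 + x i0) = x i0 + x i0 := by
    intro i hi
    rw [h3]
    exact ghost_term_le' s (fun j => x j + x j) (fun j _ => nu_ghost' (x j)) hi
  have h1' : i1 ∈ s.erase i0 := Finset.mem_erase.2 ⟨hne, h1⟩
  have e1 : (∑ i ∈ s, x i) = x i0 + ∑ i ∈ s.erase i0, x i :=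
    (Finset.add_sum_erase s x h0).symm
  have e2 : (∑ i ∈ s.erase i0, x i)
      = x i1 + ∑ i ∈ (s.erase i0).erase i1, x i :=
    (Finset.add_sum_erase _ x h1').symm
  have hgval : x i0 + x i1 = x i0 + x i0 :=
    SupertropicalSemiring.add_eq_nu ht.symm
  have hgg : ST.ghost (x i0 + x i1) := by rw [hgval]; exact nu_ghost' (x i0)
  have hfold : (x i0 + x i1) + ∑ i ∈ (s.erase i0).erase i1, x i
      = x i0 + x i1 := by
    apply ghost_add_dominated' _ _ hgg
    intro i hi
    rw [hgval]
    exact key i (Finset.mem_of_mem_erase (Finset.mem_of_mem_erase hi))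
  rw [e1, e2, ← add_assoc, hfold, hgval]
  exact nu_ghost' (x i0)

lemma ghost_sum_exists_dom' {ι : Type*} [DecidableEq ι] (s : Finset ι)
    (x : ι → R) (hg : ST.ghost (∑ i ∈ s, x i)) {i0 : ι} (h0 : i0 ∈ s)
    (ht : ¬ ST.ghost (x i0)) :
    ∃ i1 ∈ s, i1 ≠ i0 ∧ (x i0 + x i0) + (x i1 + x i1) = x i1 + x i1 := by
  by_contra hcon
  push_neg at hcon
  have hdom : ∀ i ∈ s.erase i0, (x i + x i) + (x i0 + x i0) = x i0 + x i0 := by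
    intro i hi
    obtain ⟨hne, his⟩ := Finset.mem_erase.1 hi
    rcases ghost_total' (nu_ghost' (x i0)) (nu_ghost' (x i)) with h | h
    · rw [add_comm]; exact h
    · exact absurd h (hcon i his hne)
  have hxnz : x i0 ≠ 0 := fun hz => ht (hz ▸ SupertropicalSemiring.ghost_zero)
  have hnuxnz : x i0 + x i0 ≠ 0 := fun hz => hxnz (nu_eq_zero' hz)
  have hrestnu : (∑ i ∈ s.erase i0, x i) + (∑ i ∈ s.erase i0, x i)
      = ∑ i ∈ s.erase i0, (x i + x i) := Finset.sum_add_distrib.symm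
  have hne2 : x i0 + x i0
      ≠ (∑ i ∈ s.erase i0, x i) + (∑ i ∈ s.erase i0, x i) := by
    rw [hrestnu]
    rcases ghost_sum_pick' (s.erase i0) (fun i => x i + x i)
        (fun i _ => nu_ghost' (x i)) with h | ⟨i1, hi1, h⟩
    · rw [h]; exact hnuxnz
    · rw [h]
      intro heq
      obtain ⟨hne, his⟩ := Finset.mem_erase.1 hi1
      apply hcon i1 his hne
      rw [← heq, ghost_idem' (nu_ghost' (x i0))]
  have eT : (∑ i ∈ s, x i) = x i0 + ∑ i ∈ s.erase i0, x i :=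
    (Finset.add_sum_erase s x h0).symm
  rcases SupertropicalSemiring.add_cases hne2 with h | h
  · rw [eT, h] at hg; exact ht hg
  · -- ∑ s = rest, so ν(∑ s) = ν rest, but ν(∑ s) = ν x i0
    have hd : (x i0 + x i0) + ((∑ i ∈ s.erase i0, x i) + (∑ i ∈ s.erase i0, x i))
        = x i0 + x i0 := by
      rw [hrestnu]
      apply ghost_add_dominated' _ _ (nu_ghost' (x i0))
      intro i hi
      rw [ghost_idem' (nu_ghost' (x i))]
      exact hdom i hi
    have hTnu : (∑ i ∈ s, x i) + (∑ i ∈ s, x i)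
        = (x i0 + x i0) + ((∑ i ∈ s.erase i0, x i) + (∑ i ∈ s.erase i0, x i)) := by
      rw [eT]; exact nu_add' _ _
    have hTnu2 : (∑ i ∈ s, x i) + (∑ i ∈ s, x i)
        = (∑ i ∈ s.erase i0, x i) + (∑ i ∈ s.erase i0, x i) := by
      rw [eT, h]
    exact hne2 (by rw [← hd, ← hTnu, hTnu2])

lemma le_mul_right' {g h w : R} (hle : g + h = h) : g * w + h * w = h * w := by
  rw [← add_mul, hle]

lemma le_mul_left' {g h w : R} (hle : g + h = h) : w * g + w * h = w * h := by
  rw [← mul_add, hle]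

end STAuxProof

section STMainProof

open ST SupertropicalSemiring

variable {R : Type*} [SupertropicalDomain R]

lemma ghost_sum_retract_aux (f : ST.TangibleRetract R) {p m : ℕ}
    (a : Fin p → R) (b : Fin m → Fin p → R)
    (h : ∀ j : Fin m, ST.ghost (∑ k, a k * f (b j k)))
    (c : Fin m → R) (e : Fin p → R) (he : ∀ k, e k = ∑ j, b j k * c j) :
    ST.ghost (∑ k, a k * f (e k)) := by
  classical
  by_contra hS
  -- the sum, being non-ghost, equals a single (strictly dominant) term
  obtain hg | ⟨k0, -, hSx⟩ := sum_dom' Finset.univ (fun k => a k * f (e k))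
  · exact hS hg
  have hxk0 : ¬ ST.ghost (a k0 * f (e k0)) := by
    intro hgh; exact hS (by rw [hSx]; exact hgh)
  have hak0 : ¬ ST.ghost (a k0) := fun hgh =>
    hxk0 (SupertropicalSemiring.ghost_mul_right (f (e k0)) hgh)
  have hdk0 : ¬ ST.ghost (f (e k0)) := fun hgh =>
    hxk0 (SupertropicalSemiring.ghost_mul_left (a k0) hgh)
  have hdnz : f (e k0) ≠ 0 := fun hz =>
    hdk0 (by rw [hz]; exact SupertropicalSemiring.ghost_zero)
  have hnud : f (e k0) + f (e k0) = e k0 + e k0 := nu_f' f (e k0)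
  have hnuenz : e k0 + e k0 ≠ 0 := by
    intro hz; rw [← hnud] at hz; exact hdnz (nu_eq_zero' hz)
  have hesum : e k0 + e k0 = ∑ j, (b j k0 * c j + b j k0 * c j) := by
    rw [he k0]; exact Finset.sum_add_distrib.symm
  -- pick a dominant term j0 in the ghost sum ν(e k0)
  obtain hz | ⟨j0, -, hj0⟩ := ghost_sum_pick' Finset.univ
      (fun j => b j k0 * c j + b j k0 * c j) (fun j _ => nu_ghost' _)
  · rw [← hesum] at hz; exact hnuenz hz
  have hpick : e k0 + e k0 = b j0 k0 * c j0 + b j0 k0 * c j0 := by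
    rw [hesum]; exact hj0
  -- case on whether the k0 term of the j0 hypothesis is ghost
  by_cases hyk0 : ST.ghost (a k0 * f (b j0 k0))
  · -- then f (b j0 k0) must be 0, contradicting ν(e k0) ≠ 0
    rcases f.mem_T0 (b j0 k0) with hfz | hft
    · have hb0 : b j0 k0 + b j0 k0 = 0 := by
        rw [← nu_f' f (b j0 k0), hfz, add_zero]
      have : e k0 + e k0 = 0 := by
        rw [hpick, ← add_mul, hb0, zero_mul]
      exact hnuenz this
    · exact SupertropicalDomain.tangible_mul hak0 hft hyk0
  · -- there is a tying/dominating index k1 ≠ k0 in the j0 hypothesis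
    obtain ⟨k1, -, hk1ne, hkey⟩ := ghost_sum_exists_dom' Finset.univ
      (fun k => a k * f (b j0 k)) (h j0) (Finset.mem_univ k0) hyk0
    -- abbreviations for ν-values
    have hyb : ∀ k, a k * f (b j0 k) + a k * f (b j0 k)
        = (a k + a k) * (b j0 k + b j0 k) := by
      intro k; rw [nu_mul', nu_f']
    -- ν(x k0) = ν(y k0) * ν(c j0)
    have hA : a k0 * f (e k0) + a k0 * f (e k0)
        = ((a k0 + a k0) * (b j0 k0 + b j0 k0)) * (c j0 + c j0) := by
      rw [nu_mul', hnud, hpick, nu_mul', mul_assoc]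
    -- from hkey, multiplying by ν(c j0):
    have hC : (a k0 * f (e k0) + a k0 * f (e k0))
        + ((a k1 + a k1) * (b j0 k1 + b j0 k1)) * (c j0 + c j0)
        = ((a k1 + a k1) * (b j0 k1 + b j0 k1)) * (c j0 + c j0) := by
      rw [hA]
      apply le_mul_right'
      rw [← hyb k0, ← hyb k1]
      exact hkey
    -- domination of the j0 term inside ν(e k1)
    have hD : (b j0 k1 * c j0 + b j0 k1 * c j0)
        + ∑ j, (b j k1 * c j + b j k1 * c j)
        = ∑ j, (b j k1 * c j + b j k1 * c j) :=
      ghost_term_le' Finset.univ (fun j => b j k1 * c j + b j k1 * c j)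
        (fun j _ => nu_ghost' _) (Finset.mem_univ j0)
    have hek1 : e k1 + e k1 = ∑ j, (b j k1 * c j + b j k1 * c j) := by
      rw [he k1]; exact Finset.sum_add_distrib.symm
    have hxk1nu : a k1 * f (e k1) + a k1 * f (e k1)
        = (a k1 + a k1) * ∑ j, (b j k1 * c j + b j k1 * c j) := by
      rw [nu_mul', nu_f', hek1]
    have hE : ((a k1 + a k1) * (b j0 k1 + b j0 k1)) * (c j0 + c j0)
        + (a k1 * f (e k1) + a k1 * f (e k1))
        = a k1 * f (e k1) + a k1 * f (e k1) := by
      rw [hxk1nu, mul_assoc, ← nu_mul' (b j0 k1) (c j0)]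
      exact le_mul_left' hD
    -- transitivity: ν(x k0) + ν(x k1) = ν(x k1)
    have h3 : (a k0 * f (e k0) + a k0 * f (e k0))
        + (a k1 * f (e k1) + a k1 * f (e k1))
        = a k1 * f (e k1) + a k1 * f (e k1) := by
      conv_lhs => rw [← hE, ← add_assoc, hC]
      exact hE
    -- term domination in ν(S): ν(x k1) + ν(x k0) = ν(x k0)
    have hsumnu : (∑ k, a k * f (e k)) + (∑ k, a k * f (e k))
        = ∑ k, (a k * f (e k) + a k * f (e k)) := Finset.sum_add_distrib.symm
    have h4 : (a k1 * f (e k1) + a k1 * f (e k1))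
        + (a k0 * f (e k0) + a k0 * f (e k0))
        = a k0 * f (e k0) + a k0 * f (e k0) := by
      have := ghost_term_le' Finset.univ
        (fun k => a k * f (e k) + a k * f (e k))
        (fun k _ => nu_ghost' _) (Finset.mem_univ k1)
      rw [← hsumnu, hSx] at this
      exact this
    -- antisymmetry: ν(x k1) = ν(x k0), a tie, so S is ghost
    have htie : a k1 * f (e k1) + a k1 * f (e k1)
        = a k0 * f (e k0) + a k0 * f (e k0) := by
      calc a k1 * f (e k1) + a k1 * f (e k1)
          = (a k0 * f (e k0) + a k0 * f (e k0))
            + (a k1 * f (e k1) + a k1 * f (e k1)) := by rw [h3]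
        _ = (a k1 * f (e k1) + a k1 * f (e k1))
            + (a k0 * f (e k0) + a k0 * f (e k0)) := add_comm _ _
        _ = a k0 * f (e k0) + a k0 * f (e k0) := h4
    exact hS (tie_ghost' Finset.univ (fun k => a k * f (e k))
      (Finset.mem_univ k0) (Finset.mem_univ k1) hk1ne hSx htie)

end STMainProof

/-- If `∑ k, a k * ν̂ (b j k)` is ghost for each `j`, then
`∑ k, a k * ν̂ (∑ j, b j k * c j)` is ghost for any `c`. -/
theorem ghost_sum_retract {R : Type*} [SupertropicalDomain R]
    (f : ST.TangibleRetract R) {p m : ℕ} (a : Fin p → R) (b : Fin m → Fin p → R)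
    (h : ∀ j : Fin m, ST.ghost (∑ k, a k * f (b j k))) :
    ∀ c : Fin m → R, ST.ghost (∑ k, a k * f (∑ j, b j k * c j)) :=
  fun c => ghost_sum_retract_aux f a b h c (fun k => ∑ j, b j k * c j) (fun _ => rfl)
end

section
/- For n×n matrices A, B over a commutative supertropical semiring, the permanent determinant satisfies |AB| ghost-surpasses |A||B|, i.e., |AB| = |A||B| + ghost. -/
/-- `|AB|` ghost-surpasses `|A||B|` for square matrices over a
commutative supertropical semiring. -/
theorem per_mul_gs {R : Type*} [SupertropicalSemiring R]
    (hcomm : ∀ a b : R, a * b = b * a) {n : ℕ}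
    (A B : Matrix (Fin n) (Fin n) R) :
    ST.GS (ST.per (A * B)) (ST.per A * ST.per B) := by
  classical
  letI : CommSemiring R := { (inferInstance : Semiring R) with mul_comm := hcomm }
  have hper : ∀ (M : Matrix (Fin n) (Fin n) R),
      ST.per M = ∑ σ : Equiv.Perm (Fin n), ∏ i, M i (σ i) := by
    intro M; unfold ST.per; simp [List.prod_ofFn]
  set T : (Fin n → Fin n) → Equiv.Perm (Fin n) → R :=
    fun p σ => ∏ i, A i (p i) * B (p i) (σ i) with hT
  have expand : ST.per (A * B) = ∑ p : Fin n → Fin n, ∑ σ : Equiv.Perm (Fin n), T p σ := by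
    rw [hper]
    simp only [Matrix.mul_apply, Finset.prod_univ_sum, Fintype.piFinset_univ, hT]
    rw [Finset.sum_comm]
  have ghost_sum : ∀ (s : Finset (Fin n → Fin n)) (g : (Fin n → Fin n) → R),
      (∀ x ∈ s, ST.ghost (g x)) → ST.ghost (∑ x ∈ s, g x) := by
    intro s g hg
    exact Finset.sum_induction g ST.ghost (fun a b => SupertropicalSemiring.ghost_add)
      SupertropicalSemiring.ghost_zero hg
  have key : ∀ p : Fin n → Fin n, ¬ Function.Bijective p →
      ST.ghost (∑ σ : Equiv.Perm (Fin n), T p σ) := by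
    intro p hp
    obtain ⟨i, j, hpij, hij⟩ : ∃ i j, p i = p j ∧ i ≠ j := by
      rw [← Finite.injective_iff_bijective, Function.Injective] at hp
      push_neg at hp
      exact hp
    have hps : ∀ x, p (Equiv.swap i j x) = p x := fun x =>
      Equiv.apply_swap_eq_self hpij x
    have hTswap : ∀ σ : Equiv.Perm (Fin n), T p (σ * Equiv.swap i j) = T p σ := by
      intro σ
      simp only [hT]
      rw [Finset.prod_mul_distrib, Finset.prod_mul_distrib]
      congr 1
      calc ∏ x, B (p x) ((σ * Equiv.swap i j) x)
          = ∏ x, B (p (Equiv.swap i j x)) (σ (Equiv.swap i j x)) := by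
            simp only [Equiv.Perm.coe_mul, Function.comp_apply, hps]
        _ = ∏ x, B (p x) (σ x) := Equiv.prod_comp (Equiv.swap i j) (fun x => B (p x) (σ x))
    have hsplit := Finset.sum_filter_add_sum_filter_not Finset.univ
      (fun σ : Equiv.Perm (Fin n) => Equiv.Perm.sign σ = 1) (T p)
    have hodd : ∑ σ ∈ Finset.univ.filter
          (fun σ : Equiv.Perm (Fin n) => ¬ Equiv.Perm.sign σ = 1), T p σ
        = ∑ σ ∈ Finset.univ.filter
          (fun σ : Equiv.Perm (Fin n) => Equiv.Perm.sign σ = 1), T p σ := by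
      refine Finset.sum_nbij' (fun σ => σ * Equiv.swap i j) (fun σ => σ * Equiv.swap i j)
        ?_ ?_ ?_ ?_ ?_
      · intro σ hσ
        simp only [Finset.mem_filter, Finset.mem_univ, true_and] at hσ ⊢
        rcases Int.units_eq_one_or (Equiv.Perm.sign σ) with h | h
        · exact absurd h hσ
        · rw [Equiv.Perm.sign_mul, h, Equiv.Perm.sign_swap hij]; decide
      · intro σ hσ
        simp only [Finset.mem_filter, Finset.mem_univ, true_and] at hσ ⊢
        rw [Equiv.Perm.sign_mul, hσ, Equiv.Perm.sign_swap hij]; decide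
      · intro σ _; simp [mul_assoc]
      · intro σ _; simp [mul_assoc]
      · intro σ _; exact (hTswap σ).symm
    rw [← hsplit, hodd]
    exact SupertropicalSemiring.nu_ghost _
  have hbij : ∑ p ∈ Finset.univ.filter (fun p : Fin n → Fin n => Function.Bijective p),
      ∑ σ : Equiv.Perm (Fin n), T p σ = ST.per A * ST.per B := by
    rw [hper, hper, Finset.sum_mul]
    refine Finset.sum_bij (fun p h => Equiv.ofBijective p (Finset.mem_filter.1 h).2)
      (fun _ _ => Finset.mem_univ _)
      (fun _ _ _ _ h => by injection h)
      (fun b _ => ⟨b, Finset.mem_filter.2 ⟨Finset.mem_univ _, b.bijective⟩,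
        Equiv.coe_fn_injective rfl⟩) ?_
    intro p hp
    set τ : Equiv.Perm (Fin n) := Equiv.ofBijective p (Finset.mem_filter.1 hp).2 with hτ
    have hpc : ∀ x, p x = τ x := fun x => rfl
    calc ∑ σ : Equiv.Perm (Fin n), T p σ
        = ∑ σ : Equiv.Perm (Fin n), (∏ i, A i (τ i)) * ∏ i, B (τ i) (σ i) := by
          refine Finset.sum_congr rfl fun σ _ => ?_
          simp only [hT, hpc, Finset.prod_mul_distrib]
      _ = (∏ i, A i (τ i)) * ∑ σ : Equiv.Perm (Fin n), ∏ i, B (τ i) (σ i) := by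
          rw [Finset.mul_sum]
      _ = (∏ i, A i (τ i)) * ∑ σ : Equiv.Perm (Fin n), ∏ i, B i (σ i) := by
          congr 1
          refine Fintype.sum_equiv (Equiv.mulRight τ⁻¹) _ _ fun σ => ?_
          calc ∏ i, B (τ i) (σ i)
              = ∏ i, B i (σ (τ⁻¹ i)) := by
                rw [← Equiv.prod_comp τ (fun i => B i (σ (τ⁻¹ i)))]
                simp
            _ = ∏ i, B i ((σ * τ⁻¹) i) := rfl
  have hsplitp := Finset.sum_filter_add_sum_filter_not Finset.univ
    (fun p : Fin n → Fin n => Function.Bijective p)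
    (fun p => ∑ σ : Equiv.Perm (Fin n), T p σ)
  refine ⟨∑ p ∈ Finset.univ.filter (fun p : Fin n → Fin n => ¬ Function.Bijective p),
    ∑ σ : Equiv.Perm (Fin n), T p σ, ?_, ?_⟩
  · exact ghost_sum _ _ (fun p hp => key p (Finset.mem_filter.1 hp).2)
  · rw [expand, ← hsplitp, hbij]
end

section
/- For n×n matrices A, B over a commutative supertropical semiring, adj(AB) ghost-surpasses adj(B)·adj(A), entrywise. -/
section AuxAdjMul

open Finset

/-- Sum over a set with a fixed-point-free, term-preserving involution is a ghost. -/
lemma ghost_sum_involution {R : Type*} [SupertropicalSemiring R] {α : Type*} [DecidableEq α]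
    (t : α → R) :
    ∀ (s : Finset α) (e : α → α), (∀ x ∈ s, e x ∈ s) → (∀ x ∈ s, e (e x) = x) →
      (∀ x ∈ s, e x ≠ x) → (∀ x ∈ s, t (e x) = t x) → ST.ghost (∑ x ∈ s, t x) := by
  intro s
  induction s using Finset.strongInduction with
  | _ s ih =>
    intro e hmem hinv hne ht
    rcases s.eq_empty_or_nonempty with rfl | ⟨x, hx⟩
    · simpa using SupertropicalSemiring.ghost_zero
    · have hxe : x ≠ e x := fun h => hne x hx h.symm
      have hex : e x ∈ s := hmem x hx
      have hsub : ({x, e x} : Finset α) ⊆ s := by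
        intro y hy
        simp only [Finset.mem_insert, Finset.mem_singleton] at hy
        rcases hy with rfl | rfl <;> assumption
      have hssub : s \ {x, e x} ⊂ s := by
        refine Finset.sdiff_ssubset hsub ⟨x, Finset.mem_insert_self _ _⟩
      have hsplit : ∑ y ∈ s, t y = (∑ y ∈ s \ {x, e x}, t y) + ∑ y ∈ ({x, e x} : Finset α), t y :=
        (Finset.sum_sdiff hsub).symm
      have hpair : ∑ y ∈ ({x, e x} : Finset α), t y = t x + t x := by
        rw [Finset.sum_pair hxe, ht x hx]
      have hmem' : ∀ y ∈ s \ {x, e x}, y ∈ s ∧ y ≠ x ∧ y ≠ e x := by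
        intro y hy
        simp only [Finset.mem_sdiff, Finset.mem_insert, Finset.mem_singleton, not_or] at hy
        exact ⟨hy.1, hy.2.1, hy.2.2⟩
      have hg1 : ST.ghost (∑ y ∈ s \ {x, e x}, t y) := by
        refine ih _ hssub e ?_ ?_ ?_ ?_
        · intro y hy
          obtain ⟨hys, hyx, hyex⟩ := hmem' y hy
          simp only [Finset.mem_sdiff, Finset.mem_insert, Finset.mem_singleton, not_or]
          refine ⟨hmem y hys, ?_, ?_⟩
          · intro h; apply hyex; rw [← h, hinv y hys]
          · intro h
            apply hyx
            have := congrArg e h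
            rwa [hinv y hys, hinv x hx] at this
        · intro y hy; exact hinv y (hmem' y hy).1
        · intro y hy; exact hne y (hmem' y hy).1
        · intro y hy; exact ht y (hmem' y hy).1
      have hg2 : ST.ghost (t x + t x) := SupertropicalSemiring.nu_ghost _
      rw [hsplit, hpair]
      exact SupertropicalSemiring.ghost_add hg1 hg2

/-- The least value not in the range of `f : Fin n → Fin (n+1)`. -/
noncomputable def missingVal {n : ℕ} (f : Fin n → Fin (n + 1)) : Fin (n + 1) :=
  ((Finset.univ.image f)ᶜ).min' (by
    rw [← Finset.card_pos, Finset.card_compl]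
    have h1 : (Finset.univ.image f).card ≤ n :=
      le_trans Finset.card_image_le (by simp)
    have h2 : Fintype.card (Fin (n + 1)) = n + 1 := by simp
    omega)

lemma missingVal_mem {n : ℕ} (f : Fin n → Fin (n + 1)) :
    missingVal f ∈ (Finset.univ.image f)ᶜ :=
  Finset.min'_mem _ _

lemma missingVal_ne {n : ℕ} (f : Fin n → Fin (n + 1)) (r : Fin n) : f r ≠ missingVal f := by
  intro h
  have hm := missingVal_mem f
  rw [Finset.mem_compl] at hm
  exact hm (Finset.mem_image.mpr ⟨r, Finset.mem_univ r, h⟩)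

lemma missingVal_eq {n : ℕ} (f : Fin n → Fin (n + 1)) {k : Fin (n + 1)}
    (h : ∀ x, x ∈ (Finset.univ.image f)ᶜ ↔ x = k) : missingVal f = k :=
  (h _).mp (missingVal_mem f)

/-- The factorization of `f` through `(missingVal f).succAbove`. -/
noncomputable def unSucc {n : ℕ} (f : Fin n → Fin (n + 1)) (r : Fin n) : Fin n :=
  Classical.choose (Fin.exists_succAbove_eq (missingVal_ne f r))

lemma succAbove_unSucc {n : ℕ} (f : Fin n → Fin (n + 1)) (r : Fin n) :
    (missingVal f).succAbove (unSucc f r) = f r :=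
  Classical.choose_spec (Fin.exists_succAbove_eq (missingVal_ne f r))

/-- The permutation induced by an injective `f : Fin n → Fin (n+1)`. -/
noncomputable def permOf {n : ℕ} (f : Fin n → Fin (n + 1)) (hf : Function.Injective f) :
    Equiv.Perm (Fin n) :=
  Equiv.ofBijective (unSucc f) (Finite.injective_iff_bijective.mp (by
    intro r s h
    apply hf
    rw [← succAbove_unSucc f r, ← succAbove_unSucc f s, h]))

lemma succAbove_permOf {n : ℕ} (f : Fin n → Fin (n + 1)) (hf : Function.Injective f)
    (r : Fin n) : (missingVal f).succAbove (permOf f hf r) = f r :=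
  succAbove_unSucc f r

/-- A canonical transposition collapsing a collision of a non-injective map. -/
noncomputable def swapOf {n m : ℕ} (f : Fin n → Fin m) : Equiv.Perm (Fin n) :=
  if h : ∃ p : Fin n × Fin n, p.1 ≠ p.2 ∧ f p.1 = f p.2 then
    Equiv.swap (Classical.choose h).1 (Classical.choose h).2 else 1

lemma swapOf_exists {n m : ℕ} {f : Fin n → Fin m} (hf : ¬ Function.Injective f) :
    ∃ a b : Fin n, a ≠ b ∧ f a = f b ∧ swapOf f = Equiv.swap a b := by
  have h : ∃ p : Fin n × Fin n, p.1 ≠ p.2 ∧ f p.1 = f p.2 := by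
    obtain ⟨a, b, hab, hne⟩ := Function.not_injective_iff.mp hf
    exact ⟨(a, b), hne, hab⟩
  exact ⟨(Classical.choose h).1, (Classical.choose h).2, (Classical.choose_spec h).1,
    (Classical.choose_spec h).2, by rw [swapOf, dif_pos h]⟩

lemma swapOf_apply_self {n m : ℕ} (f : Fin n → Fin m) (r : Fin n) :
    swapOf f (swapOf f r) = r := by
  rw [swapOf]
  split
  · exact Equiv.swap_apply_self _ _ _
  · rfl

lemma apply_swapOf {n m : ℕ} {f : Fin n → Fin m} (hf : ¬ Function.Injective f) (r : Fin n) :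
    f (swapOf f r) = f r := by
  obtain ⟨a, b, hab, hfab, hs⟩ := swapOf_exists hf
  rw [hs]
  rcases eq_or_ne r a with rfl | ha
  · rw [Equiv.swap_apply_left]; exact hfab.symm
  · rcases eq_or_ne r b with rfl | hb
    · rw [Equiv.swap_apply_right]; exact hfab
    · rw [Equiv.swap_apply_of_ne_of_ne ha hb]

end AuxAdjMul

/-- `adj (AB)` ghost-surpasses `adj B * adj A` entrywise. -/
theorem adj_mul_gs {R : Type*} [SupertropicalSemiring R]
    (hcomm : ∀ a b : R, a * b = b * a) {n : ℕ}
    (A B : Matrix (Fin (n + 1)) (Fin (n + 1)) R) :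
    ∀ i j, ST.GS (ST.adj (A * B) i j) ((ST.adj B * ST.adj A) i j) := by
  classical
  letI : CommSemiring R := { (inferInstance : Semiring R) with mul_comm := hcomm }
  intro i j
  -- abbreviations for the relevant entries
  set a' : Fin n → Fin (n + 1) → R := fun r c => A (j.succAbove r) c with ha'
  set b' : Fin (n + 1) → Fin n → R := fun r c => B r (i.succAbove c) with hb'
  set t : ((Fin n → Fin (n + 1)) × Equiv.Perm (Fin n)) → R :=
    fun p => (∏ r, a' r (p.1 r)) * (∏ r, b' (p.1 r) (p.2 r)) with htdef
  -- Step 0 : expand the adjoint entry of the product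
  have h0 : ST.adj (A * B) i j = ∑ p : (Fin n → Fin (n + 1)) × Equiv.Perm (Fin n), t p := by
    rw [ST.adj, ST.per]
    have step : ∀ σ : Equiv.Perm (Fin n),
        (List.ofFn fun r => (A * B).submatrix j.succAbove i.succAbove r (σ r)).prod
          = ∑ f : Fin n → Fin (n + 1), ∏ r, (a' r (f r) * b' (f r) (σ r)) := by
      intro σ
      rw [List.prod_ofFn]
      have : ∀ r : Fin n, (A * B).submatrix j.succAbove i.succAbove r (σ r)
          = ∑ k ∈ (Finset.univ : Finset (Fin (n + 1))), a' r k * b' k (σ r) := by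
        intro r
        simp [Matrix.mul_apply, ha', hb']
      rw [Finset.prod_congr rfl fun r _ => this r, Finset.prod_univ_sum,
        Fintype.piFinset_univ]
    rw [Finset.sum_congr rfl fun σ _ => step σ, Fintype.sum_prod_type_right]
    refine Finset.sum_congr rfl fun σ _ => Finset.sum_congr rfl fun f _ => ?_
    simp only [htdef]
    rw [Finset.prod_mul_distrib]
  -- split the sum into injective and non-injective parts
  have hsplit : (∑ p : (Fin n → Fin (n + 1)) × Equiv.Perm (Fin n), t p)
      = (∑ p ∈ Finset.univ.filter (fun p : (Fin n → Fin (n + 1)) × Equiv.Perm (Fin n) =>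
            Function.Injective p.1), t p)
        + ∑ p ∈ Finset.univ.filter (fun p : (Fin n → Fin (n + 1)) × Equiv.Perm (Fin n) =>
            ¬ Function.Injective p.1), t p :=
    (Finset.sum_filter_add_sum_filter_not _ _ _).symm
  -- Step 1 : the injective part equals the (i,j) entry of adj B * adj A
  set g : Fin (n + 1) × Equiv.Perm (Fin n) × Equiv.Perm (Fin n) → R :=
    fun x => (∏ r, a' r (x.1.succAbove (x.2.2 r))) * (∏ r, b' (x.1.succAbove r) (x.2.1 r))
    with hgdef
  have hrhs : (ST.adj B * ST.adj A) i j
      = ∑ x : Fin (n + 1) × Equiv.Perm (Fin n) × Equiv.Perm (Fin n), g x := by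
    rw [Matrix.mul_apply, Fintype.sum_prod_type]
    refine Finset.sum_congr rfl fun k _ => ?_
    rw [ST.adj, ST.adj, ST.per, ST.per, Fintype.sum_mul_sum, Fintype.sum_prod_type]
    refine Finset.sum_congr rfl fun σ' _ => Finset.sum_congr rfl fun τ _ => ?_
    rw [hgdef]
    simp only [List.prod_ofFn, Matrix.submatrix_apply, ha', hb']
    exact mul_comm _ _
  have h1 : (∑ p ∈ Finset.univ.filter (fun p : (Fin n → Fin (n + 1)) × Equiv.Perm (Fin n) =>
        Function.Injective p.1), t p) = (ST.adj B * ST.adj A) i j := by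
    rw [hrhs]
    set Ψ : (Fin n → Fin (n + 1)) × Equiv.Perm (Fin n) →
        Fin (n + 1) × Equiv.Perm (Fin n) × Equiv.Perm (Fin n) :=
      fun p => if hf : Function.Injective p.1 then
        (missingVal p.1, (permOf p.1 hf).symm.trans p.2, permOf p.1 hf)
      else (0, 1, 1) with hΨ
    set Φ : Fin (n + 1) × Equiv.Perm (Fin n) × Equiv.Perm (Fin n) →
        (Fin n → Fin (n + 1)) × Equiv.Perm (Fin n) :=
      fun x => (fun r => x.1.succAbove (x.2.2 r), (x.2.2).trans (x.2.1)) with hΦ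
    have hΦinj : ∀ (k : Fin (n + 1)) (τ : Equiv.Perm (Fin n)),
        Function.Injective (fun r => k.succAbove (τ r)) := by
      intro k τ r s h
      exact τ.injective (Fin.succAbove_right_injective h)
    have hmissing : ∀ (k : Fin (n + 1)) (τ : Equiv.Perm (Fin n)),
        missingVal (fun r => k.succAbove (τ r)) = k := by
      intro k τ
      refine missingVal_eq _ fun x => ?_
      simp only [Finset.mem_compl, Finset.mem_image, Finset.mem_univ, true_and, not_exists]
      constructor
      · intro h
        by_contra hxk
        obtain ⟨z, hz⟩ := Fin.exists_succAbove_eq hxk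
        exact h (τ.symm z) (by rw [Equiv.apply_symm_apply]; exact hz)
      · rintro rfl r
        exact Fin.succAbove_ne _ _
    have hpermOf : ∀ (k : Fin (n + 1)) (τ : Equiv.Perm (Fin n)),
        permOf (fun r => k.succAbove (τ r)) (hΦinj k τ) = τ := by
      intro k τ
      refine Equiv.ext fun r => ?_
      apply Fin.succAbove_right_injective (p := k)
      have := succAbove_permOf (fun r => k.succAbove (τ r)) (hΦinj k τ) r
      rw [hmissing k τ] at this
      exact this
    refine Finset.sum_nbij' Ψ Φ (fun p _ => Finset.mem_univ _) ?_ ?_ ?_ ?_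
    · -- Φ maps into the injective part
      intro x _
      simp only [Finset.mem_filter, Finset.mem_univ, true_and, hΦ]
      exact hΦinj x.1 x.2.2
    · -- left inverse
      intro p hp
      have hf : Function.Injective p.1 := (Finset.mem_filter.mp hp).2
      rw [hΨ]
      simp only [hf, dif_pos]
      rw [hΦ]
      refine Prod.ext ?_ ?_
      · funext r
        exact succAbove_permOf p.1 hf r
      · ext r
        simp
    · -- right inverse
      intro x _
      obtain ⟨k, σ', τ⟩ := x
      have hf : Function.Injective (fun r => k.succAbove (τ r)) := hΦinj k τ
      rw [hΦ, hΨ]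
      simp only
      rw [dif_pos hf]
      refine Prod.ext ?_ (Prod.ext ?_ ?_)
      · exact hmissing k τ
      · simp only [hpermOf k τ]
        ext r
        simp
      · exact hpermOf k τ
    · -- summands agree
      intro p hp
      have hf : Function.Injective p.1 := (Finset.mem_filter.mp hp).2
      rw [hΨ]
      simp only [hf, dif_pos]
      rw [htdef, hgdef]
      simp only
      congr 1
      · refine Finset.prod_congr rfl fun r _ => ?_
        rw [succAbove_permOf p.1 hf r]
      · simp only [Equiv.trans_apply]
        have := Equiv.prod_comp (permOf p.1 hf)
          (fun u => b' ((missingVal p.1).succAbove u) (p.2 ((permOf p.1 hf).symm u)))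
        rw [← this]
        refine Finset.prod_congr rfl fun r _ => ?_
        rw [succAbove_permOf p.1 hf r, Equiv.symm_apply_apply]
  -- Step 2 : the non-injective part is a ghost
  have h2 : ST.ghost (∑ p ∈ Finset.univ.filter
      (fun p : (Fin n → Fin (n + 1)) × Equiv.Perm (Fin n) => ¬ Function.Injective p.1), t p) := by
    refine ghost_sum_involution t _ (fun p => (p.1, (swapOf p.1).trans p.2)) ?_ ?_ ?_ ?_
    · intro p hp
      simpa using (Finset.mem_filter.mp hp).2
    · intro p hp
      refine Prod.ext rfl ?_
      simp only
      ext r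
      simp [swapOf_apply_self]
    · intro p hp
      have hf : ¬ Function.Injective p.1 := (Finset.mem_filter.mp hp).2
      obtain ⟨a, b, hab, hfab, hs⟩ := swapOf_exists hf
      intro hcontr
      have h2 := congrArg Prod.snd hcontr
      simp only at h2
      have h3 := DFunLike.congr_fun h2 a
      rw [Equiv.trans_apply, hs, Equiv.swap_apply_left] at h3
      exact hab (p.2.injective h3).symm
    · intro p hp
      have hf : ¬ Function.Injective p.1 := (Finset.mem_filter.mp hp).2
      rw [htdef]
      simp only
      simp only [Equiv.trans_apply]
      congr 1
      have := Equiv.prod_comp (swapOf p.1) (fun u => b' (p.1 u) (p.2 u))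
      rw [← this]
      refine Finset.prod_congr rfl fun r _ => ?_
      rw [apply_swapOf hf]
  exact ⟨_, h2, by rw [h0, hsplit, h1]⟩
end

section
/- For any n×n matrix A over a supertropical semiring, |A|·adj(A) ≥_ν adj(A)·A·adj(A), entrywise in ν-value. -/
section AuxPerm

open Equiv Function

variable {X : Type*} [Fintype X] [DecidableEq X]

private lemma perm_pow_mod (φ : Equiv.Perm X) (j : X) {p : ℕ} (hp : (φ ^ p) j = j) (t : ℕ) :
    (φ ^ t) j = (φ ^ (t % p)) j := by
  conv_lhs => rw [← Nat.mod_add_div t p]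
  rw [pow_add, Equiv.Perm.mul_apply]
  congr 1
  induction t / p with
  | zero => simp
  | succ q ih => rw [Nat.mul_succ, pow_add, Equiv.Perm.mul_apply, hp]; exact ih

private lemma build_pair (σ' τ' : Equiv.Perm X) (k j : X)
    (hli : τ' j ≠ σ' k) (S : X → Prop) (hjS : S j)
    (hfwd : ∀ x, S x → x ≠ k → S (τ'⁻¹ (σ' x)))
    (hbwd : ∀ x, S x → x ≠ j → S (σ'⁻¹ (τ' x)))
    (hka : S k ↔ ¬ S (σ'⁻¹ (τ' j)))
    (hb : ¬ S (τ'⁻¹ (σ' k))) :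
    ∃ π ρ : Equiv.Perm X,
      (∀ x, (π x = Function.update ⇑σ' k (τ' j) x ∧ ρ x = Function.update ⇑τ' j (σ' k) x) ∨
            (π x = Function.update ⇑τ' j (σ' k) x ∧ ρ x = Function.update ⇑σ' k (τ' j) x)) ∧
      π j = Function.update ⇑σ' k (τ' j) j ∧ ρ j = σ' k := by
  classical
  set i := σ' k with hi
  set l := τ' j with hl
  set h1 : X → X := Function.update ⇑σ' k l with hh1
  set h2 : X → X := Function.update ⇑τ' j i with hh2
  have h1k : h1 k = l := Function.update_self _ _ _
  have h1ne : ∀ x, x ≠ k → h1 x = σ' x := fun x hx => Function.update_of_ne hx _ _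
  have h2j : h2 j = i := Function.update_self _ _ _
  have h2ne : ∀ x, x ≠ j → h2 x = τ' x := fun x hx => Function.update_of_ne hx _ _
  set f : X → X := fun x => if S x then h1 x else h2 x with hf
  set g : X → X := fun x => if S x then h2 x else h1 x with hg
  -- mixed collisions for f
  have hmix1 : ∀ x y, S x → ¬ S y → h1 x ≠ h2 y := by
    intro x y hx hy hxy
    have hyj : y ≠ j := fun h => hy (h ▸ hjS)
    rw [h2ne y hyj] at hxy
    by_cases hxk : x = k
    · rw [hxk, h1k] at hxy
      exact hyj (τ'.injective (hxy.symm.trans hl))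
    · rw [h1ne x hxk] at hxy
      have hyv : τ'⁻¹ (σ' x) = y := by rw [hxy]; exact Equiv.symm_apply_apply _ _
      exact hy (hyv ▸ hfwd x hx hxk)
  -- mixed collisions for g
  have hmix2 : ∀ x y, S x → ¬ S y → h2 x ≠ h1 y := by
    intro x y hx hy hxy
    by_cases hxj : x = j
    · rw [hxj, h2j] at hxy
      by_cases hyk : y = k
      · rw [hyk, h1k] at hxy; exact hli hxy.symm
      · rw [h1ne y hyk] at hxy
        exact hyk (σ'.injective (hxy.symm.trans hi.symm))
    · rw [h2ne x hxj] at hxy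
      by_cases hyk : y = k
      · rw [hyk, h1k] at hxy
        exact hxj (τ'.injective (hxy.trans hl))
      · rw [h1ne y hyk] at hxy
        have hyv : σ'⁻¹ (τ' x) = y := by rw [hxy]; exact Equiv.symm_apply_apply _ _
        exact hy (hyv ▸ hbwd x hx hxj)
  have hfinj : Function.Injective f := by
    intro x y hxy
    by_cases hx : S x <;> by_cases hy : S y <;>
      simp only [hf, hx, hy, if_pos, if_neg, if_true, if_false, not_false_iff] at hxy
    · -- both in S : h1 x = h1 y
      by_cases hxk : x = k
      · by_cases hyk : y = k
        · rw [hxk, hyk]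
        · exfalso
          rw [hxk, h1k, h1ne y hyk] at hxy
          have hyv : σ'⁻¹ l = y := by rw [hxy]; exact Equiv.symm_apply_apply _ _
          exact (hka.mp (hxk ▸ hx)) (hyv.symm ▸ hy)
      · by_cases hyk : y = k
        · exfalso
          rw [hyk, h1k, h1ne x hxk] at hxy
          have hxv : σ'⁻¹ l = x := by rw [← hxy]; exact Equiv.symm_apply_apply _ _
          exact (hka.mp (hyk ▸ hy)) (hxv.symm ▸ hx)
        · rw [h1ne x hxk, h1ne y hyk] at hxy
          exact σ'.injective hxy
    · exact absurd hxy (hmix1 x y hx hy)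
    · exact absurd hxy.symm (hmix1 y x hy hx)
    · -- both outside S : h2 x = h2 y
      have hxj : x ≠ j := fun h => hx (h ▸ hjS)
      have hyj : y ≠ j := fun h => hy (h ▸ hjS)
      rw [h2ne x hxj, h2ne y hyj] at hxy
      exact τ'.injective hxy
  have hginj : Function.Injective g := by
    intro x y hxy
    by_cases hx : S x <;> by_cases hy : S y <;>
      simp only [hg, hx, hy, if_pos, if_neg, if_true, if_false, not_false_iff] at hxy
    · -- both in S : h2 x = h2 y
      by_cases hxj : x = j
      · by_cases hyj : y = j
        · rw [hxj, hyj]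
        · exfalso
          rw [hxj, h2j, h2ne y hyj] at hxy
          have hyv : τ'⁻¹ i = y := by rw [hxy]; exact Equiv.symm_apply_apply _ _
          exact hb (hyv.symm ▸ hy)
      · by_cases hyj : y = j
        · exfalso
          rw [hyj, h2j, h2ne x hxj] at hxy
          have hxv : τ'⁻¹ i = x := by rw [← hxy]; exact Equiv.symm_apply_apply _ _
          exact hb (hxv.symm ▸ hx)
        · rw [h2ne x hxj, h2ne y hyj] at hxy
          exact τ'.injective hxy
    · exact absurd hxy (hmix2 x y hx hy)
    · exact absurd hxy.symm (hmix2 y x hy hx)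
    · -- both outside S : h1 x = h1 y
      by_cases hxk : x = k
      · by_cases hyk : y = k
        · rw [hxk, hyk]
        · exfalso
          rw [hxk, h1k, h1ne y hyk] at hxy
          have hyv : σ'⁻¹ l = y := by rw [hxy]; exact Equiv.symm_apply_apply _ _
          have haS : S (σ'⁻¹ l) := by
            by_contra h; exact (hxk ▸ hx) (hka.mpr h)
          exact hy (hyv ▸ haS)
      · by_cases hyk : y = k
        · exfalso
          rw [hyk, h1k, h1ne x hxk] at hxy
          have hxv : σ'⁻¹ l = x := by rw [← hxy]; exact Equiv.symm_apply_apply _ _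
          have haS : S (σ'⁻¹ l) := by
            by_contra h; exact (hyk ▸ hy) (hka.mpr h)
          exact hx (hxv ▸ haS)
        · rw [h1ne x hxk, h1ne y hyk] at hxy
          exact σ'.injective hxy
  have hfbij := Finite.injective_iff_bijective.mp hfinj
  have hgbij := Finite.injective_iff_bijective.mp hginj
  refine ⟨Equiv.ofBijective f hfbij, Equiv.ofBijective g hgbij, ?_, ?_, ?_⟩
  · intro x
    by_cases hx : S x
    · left
      constructor
      · show f x = h1 x; simp [hf, hx]
      · show g x = h2 x; simp [hg, hx]
    · right
      constructor
      · show f x = h2 x; simp [hf, hx]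
      · show g x = h1 x; simp [hg, hx]
  · show f j = h1 j; simp [hf, hjS]
  · show g j = i
    have : g j = h2 j := by simp [hg, hjS]
    rw [this, h2j]

private lemma exists_perm_pair (σ' τ' : Equiv.Perm X) (k j : X) :
    ∃ π ρ : Equiv.Perm X,
      (∀ x, (π x = Function.update ⇑σ' k (τ' j) x ∧ ρ x = Function.update ⇑τ' j (σ' k) x) ∨
            (π x = Function.update ⇑τ' j (σ' k) x ∧ ρ x = Function.update ⇑σ' k (τ' j) x)) ∧
      π j = Function.update ⇑σ' k (τ' j) j ∧ ρ j = σ' k := by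
  classical
  by_cases hli : τ' j = σ' k
  · have e1 : Function.update ⇑σ' k (τ' j) = ⇑σ' := by
      rw [hli]; exact Function.update_eq_self _ _
    have e2 : Function.update ⇑τ' j (σ' k) = ⇑τ' := by
      rw [← hli]; exact Function.update_eq_self _ _
    exact ⟨σ', τ', fun x => Or.inl ⟨(congrFun e1 x).symm, (congrFun e2 x).symm⟩,
      (congrFun e1 j).symm, hli⟩
  · set φ : Equiv.Perm X := τ'⁻¹ * σ' with hφdef
    have hφ : ∀ x, φ x = τ'⁻¹ (σ' x) := fun x => rfl
    have hφinv : ∀ x, φ⁻¹ x = σ'⁻¹ (τ' x) := by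
      intro x; rw [hφdef, mul_inv_rev, inv_inv]; rfl
    have ha_ne_k : σ'⁻¹ (τ' j) ≠ k := by
      intro h
      apply hli
      have := congrArg σ' h
      simpa using this
    have hb_ne_j : τ'⁻¹ (σ' k) ≠ j := by
      intro h
      apply hli
      have := congrArg τ' h
      simpa using this.symm
    by_cases hsc : φ.SameCycle j k
    · -- k is in the φ-cycle of j
      have hex : ∃ m : ℕ, (φ ^ m) j = k := by
        obtain ⟨m, -, -, hm⟩ := Equiv.Perm.SameCycle.exists_pow_eq φ hsc
        exact ⟨m, hm⟩
      set N := Nat.find hex with hNdef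
      have hN : (φ ^ N) j = k := Nat.find_spec hex
      have hmin : ∀ t, t < N → (φ ^ t) j ≠ k := fun t ht => Nat.find_min hex ht
      apply build_pair σ' τ' k j hli (fun x => ∃ m ≤ N, (φ ^ m) j = x)
      · exact ⟨0, Nat.zero_le _, by simp⟩
      · rintro x ⟨m, hm, hmx⟩ hxk
        have hmN : m ≠ N := by
          rintro rfl; exact hxk (hmx.symm.trans hN)
        refine ⟨m + 1, by omega, ?_⟩
        rw [pow_succ', Equiv.Perm.mul_apply, hmx]
        exact hφ x
      · rintro x ⟨m, hm, hmx⟩ hxj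
        have hm0 : m ≠ 0 := by
          rintro rfl; exact hxj (by simpa using hmx.symm)
        refine ⟨m - 1, by omega, ?_⟩
        have h' : (φ ^ ((m - 1) + 1)) j = x := by
          rw [show m - 1 + 1 = m from by omega]; exact hmx
        rw [pow_succ', Equiv.Perm.mul_apply] at h'
        have h'' := congrArg (⇑φ⁻¹) h'
        rw [show ∀ y, φ⁻¹ (φ y) = y from fun y => Equiv.symm_apply_apply φ y] at h''
        rw [hφinv] at h''
        exact h''
      · constructor
        · rintro - ⟨m, hm, hma⟩
          have hper : (φ ^ (m + 1)) j = j := by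
            rw [pow_succ', Equiv.Perm.mul_apply, hma, ← hφinv]
            exact Equiv.apply_symm_apply φ j
          have h2' := perm_pow_mod φ j hper N
          have hlt : N % (m + 1) < m + 1 := Nat.mod_lt _ (by omega)
          have hge : N ≤ N % (m + 1) := by
            by_contra h
            push_neg at h
            exact hmin _ h (h2'.symm.trans hN)
          have hmN : m = N := by omega
          exact ha_ne_k (by rw [← hma, hmN]; exact hN)
        · intro _
          exact ⟨N, le_refl _, hN⟩
      · rintro ⟨m, hm, hmb⟩
        have hb' : (φ ^ m) j = φ ((φ ^ N) j) := by
          rw [hN, hφ]; exact hmb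
        have hb2 : (φ ^ (N + 1)) j = (φ ^ m) j := by
          rw [pow_succ', Equiv.Perm.mul_apply]; exact hb'.symm
        have hsplit : (φ ^ (N + 1)) j = (φ ^ m) ((φ ^ (N + 1 - m)) j) := by
          rw [← Equiv.Perm.mul_apply, ← pow_add, show m + (N + 1 - m) = N + 1 from by omega]
        have hper0 : (φ ^ (N + 1 - m)) j = j := by
          have := hsplit.symm.trans hb2
          exact (Equiv.injective _) this
        have hppos : 0 < N + 1 - m := by omega
        have h2' := perm_pow_mod φ j hper0 N
        have hge : N ≤ N % (N + 1 - m) := by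
          by_contra h
          push_neg at h
          exact hmin _ h (h2'.symm.trans hN)
        have hlt : N % (N + 1 - m) < N + 1 - m := Nat.mod_lt _ hppos
        have hm0 : m = 0 := by omega
        refine hb_ne_j ?_
        rw [← hmb, hm0]
        simp
    · -- k is not in the φ-cycle of j
      apply build_pair σ' τ' k j hli (fun x => φ.SameCycle j x)
      · exact Equiv.Perm.SameCycle.refl φ j
      · intro x hx _
        have h' : φ.SameCycle j (φ x) := Equiv.Perm.sameCycle_apply_right.mpr hx
        rw [hφ x] at h'
        exact h'
      · intro x hx _
        have h' : φ.SameCycle j (φ⁻¹ x) := Equiv.Perm.sameCycle_symm_apply_right.mpr hx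
        rw [hφinv x] at h'
        exact h'
      · have haS : φ.SameCycle j (σ'⁻¹ (τ' j)) := by
          have h' : φ.SameCycle j (φ⁻¹ j) :=
            Equiv.Perm.sameCycle_symm_apply_right.mpr (Equiv.Perm.SameCycle.refl φ j)
          rw [hφinv j] at h'
          exact h'
        exact iff_of_false hsc (not_not_intro haS)
      · intro h
        apply hsc
        have h' : φ.SameCycle j (φ k) := by rw [hφ k]; exact h
        exact Equiv.Perm.sameCycle_apply_right.mp h'

end AuxPerm

section NuLeLemmas

variable {R : Type*} [SupertropicalSemiring R]

private lemma nuLe_trans' {a b c : R} (h1 : ST.nuLe a b) (h2 : ST.nuLe b c) : ST.nuLe a c := by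
  unfold ST.nuLe at *
  calc a + a + (c + c) = a + a + (b + b + (c + c)) := by rw [h2]
    _ = a + a + (b + b) + (c + c) := by abel
    _ = b + b + (c + c) := by rw [h1]
    _ = c + c := h2

private lemma nuLe_add' {a b c : R} (h1 : ST.nuLe a c) (h2 : ST.nuLe b c) :
    ST.nuLe (a + b) c := by
  unfold ST.nuLe at *
  calc a + b + (a + b) + (c + c) = a + a + (b + b + (c + c)) := by abel
    _ = a + a + (c + c) := by rw [h2]
    _ = c + c := h1

private lemma nuLe_self_add' (a b : R) : ST.nuLe a (a + b) := by
  unfold ST.nuLe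
  have h := SupertropicalSemiring.nu_idem a
  calc a + a + (a + b + (a + b)) = a + a + (a + a) + (b + b) := by abel
    _ = a + a + (b + b) := by rw [h]
    _ = a + b + (a + b) := by abel

private lemma nuLe_zero' (c : R) : ST.nuLe (0 : R) c := by unfold ST.nuLe; simp

private lemma nuLe_sum' {ι : Type*} (s : Finset ι) (f : ι → R) (c : R)
    (h : ∀ t ∈ s, ST.nuLe (f t) c) : ST.nuLe (∑ t ∈ s, f t) c := by
  classical
  induction s using Finset.induction_on with
  | empty => simpa using nuLe_zero' c
  | insert _ _ hx ih =>
    rw [Finset.sum_insert hx]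
    exact nuLe_add' (h _ (Finset.mem_insert_self _ _))
      (ih fun t ht => h t (Finset.mem_insert_of_mem ht))

private lemma nuLe_mem_sum' {ι : Type*} (s : Finset ι) (f : ι → R) {x : ι} (hx : x ∈ s) :
    ST.nuLe (f x) (∑ t ∈ s, f t) := by
  classical
  rw [← Finset.add_sum_erase s f hx]
  exact nuLe_self_add' _ _

private lemma nuLe_mem_sum2 {ι : Type*} [Fintype ι] (f : ι → R) (x : ι) :
    ST.nuLe (f x) (∑ t, f t) := nuLe_mem_sum' Finset.univ f (Finset.mem_univ x)

end NuLeLemmas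

set_option maxHeartbeats 2000000 in
/-- `|A|·adj A ≥_ν adj A · A · adj A` entrywise. -/
theorem per_adj_nu_ge {R : Type*} [SupertropicalSemiring R]
    (hcomm : ∀ a b : R, a * b = b * a) {n : ℕ}
    (A : Matrix (Fin (n + 1)) (Fin (n + 1)) R) :
    ∀ i j, ST.nuLe ((ST.adj A * A * ST.adj A) i j) (ST.per A * ST.adj A i j) := by
  intro i j
  classical
  letI instM : CommMonoid R := { (inferInstance : Monoid R) with mul_comm := hcomm }
  have per_eq : ∀ {m : ℕ} (B : Matrix (Fin m) (Fin m) R),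
      ST.per B = ∑ σ : Equiv.Perm (Fin m), ∏ r, B r (σ r) := by
    intro m B
    exact Finset.sum_congr rfl fun σ _ => List.prod_ofFn
  have hmain : ST.nuLe ((ST.adj A * A * ST.adj A) i j) (ST.per A * ST.adj A i j) := by
    have e0 : (ST.adj A * A * ST.adj A) i j
        = ∑ l, ∑ k, ST.adj A i k * A k l * ST.adj A l j := by
      simp [Matrix.mul_apply, Finset.sum_mul]
    rw [e0]
    have e2 : ST.per A * ST.adj A i j
        = ∑ π' : Equiv.Perm (Fin (n + 1)), ∑ ρ' : Equiv.Perm (Fin n),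
            (∏ x, A x (π' x)) * (∏ r, A (j.succAbove r) (i.succAbove (ρ' r))) := by
      have eP : ST.per A = ∑ π' : Equiv.Perm (Fin (n + 1)), ∏ x, A x (π' x) := per_eq _
      have eQ : ST.adj A i j
          = ∑ ρ' : Equiv.Perm (Fin n), ∏ r, A (j.succAbove r) (i.succAbove (ρ' r)) := per_eq _
      rw [eP, eQ, Finset.sum_mul_sum]
    refine nuLe_sum' _ _ _ fun l _ => nuLe_sum' _ _ _ fun k _ => ?_
    have eA1 : ST.adj A i k
        = ∑ σ : Equiv.Perm (Fin n), ∏ r, A (k.succAbove r) (i.succAbove (σ r)) := per_eq _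
    have eA2 : ST.adj A l j
        = ∑ τ : Equiv.Perm (Fin n), ∏ r, A (j.succAbove r) (l.succAbove (τ r)) := per_eq _
    have e1 : ST.adj A i k * A k l * ST.adj A l j
        = ∑ σ : Equiv.Perm (Fin n), ∑ τ : Equiv.Perm (Fin n),
            (∏ r, A (k.succAbove r) (i.succAbove (σ r))) * A k l *
            (∏ r, A (j.succAbove r) (l.succAbove (τ r))) := by
      rw [eA1, eA2]
      simp only [Finset.sum_mul, Finset.mul_sum]
      rw [Finset.sum_comm]
    rw [e1]
    refine nuLe_sum' _ _ _ fun σ _ => nuLe_sum' _ _ _ fun τ _ => ?_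
    -- build the full permutations σ', τ'
    set σ' : Equiv.Perm (Fin (n + 1)) :=
      (finSuccEquiv' k).trans ((Equiv.optionCongr σ).trans (finSuccEquiv' i).symm) with hσ'
    set τ' : Equiv.Perm (Fin (n + 1)) :=
      (finSuccEquiv' j).trans ((Equiv.optionCongr τ).trans (finSuccEquiv' l).symm) with hτ'
    have hσ'k : σ' k = i := by
      rw [hσ']
      simp [finSuccEquiv'_at, finSuccEquiv'_symm_none]
    have hσ'sa : ∀ r, σ' (k.succAbove r) = i.succAbove (σ r) := by
      intro r
      rw [hσ']
      simp [finSuccEquiv'_succAbove, finSuccEquiv'_symm_some]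
    have hτ'j : τ' j = l := by
      rw [hτ']
      simp [finSuccEquiv'_at, finSuccEquiv'_symm_none]
    have hτ'sa : ∀ r, τ' (j.succAbove r) = l.succAbove (τ r) := by
      intro r
      rw [hτ']
      simp [finSuccEquiv'_succAbove, finSuccEquiv'_symm_some]
    clear_value σ' τ'
    obtain ⟨π, ρ, hall, hπj, hρj⟩ := exists_perm_pair σ' τ' k j
    rw [hτ'j] at hall hπj
    rw [hσ'k] at hall hρj
    -- extract the small permutation ρ₀ from ρ
    have hρne : ∀ r : Fin n, ρ (j.succAbove r) ≠ i := by
      intro r h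
      exact Fin.succAbove_ne j r (ρ.injective (h.trans hρj.symm))
    set E : Option (Fin n) ≃ Option (Fin n) :=
      (finSuccEquiv' j).symm.trans (ρ.trans (finSuccEquiv' i)) with hE
    set ρ₀ : Equiv.Perm (Fin n) := E.removeNone with hρ₀
    have hρ₀eq : ∀ r, ρ (j.succAbove r) = i.succAbove (ρ₀ r) := by
      intro r
      have h2 : E (some r) = finSuccEquiv' i (ρ (j.succAbove r)) := by
        rw [hE]
        simp [finSuccEquiv'_symm_some]
      have hex : ∃ y, E (some r) = some y := by
        rw [h2]
        rcases h' : finSuccEquiv' i (ρ (j.succAbove r)) with _ | y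
        · exfalso
          apply hρne r
          have := congrArg (finSuccEquiv' i).symm h'
          simpa [finSuccEquiv'_symm_none] using this
        · exact ⟨y, rfl⟩
      have h1 : some (ρ₀ r) = E (some r) := Equiv.removeNone_some E hex
      have h3 := h1.trans h2
      have h4 := congrArg (finSuccEquiv' i).symm h3
      simp only [Equiv.symm_apply_apply, finSuccEquiv'_symm_some] at h4
      exact h4.symm
    clear_value E ρ₀
    -- the term equality
    have hT : (∏ r, A (k.succAbove r) (i.succAbove (σ r))) * A k l *
          (∏ r, A (j.succAbove r) (l.succAbove (τ r)))
        = (∏ x, A x (π x)) * (∏ r, A (j.succAbove r) (i.succAbove (ρ₀ r))) := by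
      symm
      calc (∏ x, A x (π x)) * (∏ r, A (j.succAbove r) (i.succAbove (ρ₀ r)))
          = (∏ x, A x (π x)) * (∏ r, A (j.succAbove r) (ρ (j.succAbove r))) := by
            congr 1
            exact Finset.prod_congr rfl fun r _ => by rw [hρ₀eq r]
        _ = A j (π j) * ((∏ r, A (j.succAbove r) (π (j.succAbove r))) *
              (∏ r, A (j.succAbove r) (ρ (j.succAbove r)))) := by
            rw [Fin.prod_univ_succAbove (fun x => A x (π x)) j, mul_assoc]
        _ = A j (Function.update (⇑σ') k l j) *
              ((∏ r, A (j.succAbove r) (Function.update (⇑σ') k l (j.succAbove r))) *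
               (∏ r, A (j.succAbove r) (Function.update (⇑τ') j i (j.succAbove r)))) := by
            rw [hπj, ← Finset.prod_mul_distrib, ← Finset.prod_mul_distrib]
            congr 1
            refine Finset.prod_congr rfl fun r _ => ?_
            rcases hall (j.succAbove r) with ⟨hp, hr⟩ | ⟨hp, hr⟩
            · rw [hp, hr]
            · rw [hp, hr, mul_comm]
        _ = (∏ x, A x (Function.update (⇑σ') k l x)) *
              (∏ r, A (j.succAbove r) (Function.update (⇑τ') j i (j.succAbove r))) := by
            rw [← mul_assoc,
              ← Fin.prod_univ_succAbove (fun x => A x (Function.update (⇑σ') k l x)) j]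
        _ = (A k l * ∏ r, A (k.succAbove r) (i.succAbove (σ r))) *
              (∏ r, A (j.succAbove r) (l.succAbove (τ r))) := by
            rw [Fin.prod_univ_succAbove (fun x => A x (Function.update (⇑σ') k l x)) k]
            congr 1
            · congr 1
              · rw [Function.update_self]
              · refine Finset.prod_congr rfl fun r _ => ?_
                rw [Function.update_of_ne (Fin.succAbove_ne k r) _ _, hσ'sa]
            · refine Finset.prod_congr rfl fun r _ => ?_
              rw [Function.update_of_ne (Fin.succAbove_ne j r) _ _, hτ'sa]
        _ = (∏ r, A (k.succAbove r) (i.succAbove (σ r))) * A k l *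
              (∏ r, A (j.succAbove r) (l.succAbove (τ r))) := by
            rw [mul_comm (A k l)]
    set Ff : Equiv.Perm (Fin n) → R :=
      fun ρ' => (∏ x, A x (π x)) * (∏ r, A (j.succAbove r) (i.succAbove (ρ' r))) with hFf
    set G : Equiv.Perm (Fin (n + 1)) → R :=
      fun π' => ∑ ρ' : Equiv.Perm (Fin n),
        (∏ x, A x (π' x)) * (∏ r, A (j.succAbove r) (i.succAbove (ρ' r))) with hG
    have m1 : ST.nuLe (Ff ρ₀) (∑ t, Ff t) := nuLe_mem_sum2 Ff ρ₀
    have m2 : ST.nuLe (G π) (∑ t, G t) := nuLe_mem_sum2 G π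
    have hT' : (∏ r, A (k.succAbove r) (i.succAbove (σ r))) * A k l *
          (∏ r, A (j.succAbove r) (l.succAbove (τ r))) = Ff ρ₀ := by
      simp only [hFf]
      exact hT
    have e2' : ST.per A * ST.adj A i j = ∑ t, G t := by
      rw [e2]
      try simp only [hG]
    have hlink : (∑ t, Ff t) = G π := by
      simp only [hFf, hG]
    rw [hT', e2']
    exact nuLe_trans' (hlink ▸ m1) m2
  exact hmain
end

section
/- For any n×n matrix A over a supertropical semiring, adj(A)·adj(adj(A))·adj(A) ≅_ν |A|^{n-1}·adj(A), entrywise in ν-value. -/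
/-! ### Auxiliary development -/

/-- A commutative supertropical semiring (auxiliary bundling). -/
class STComm (R : Type*) extends SupertropicalSemiring R where
  mul_comm' : ∀ a b : R, a * b = b * a

instance STComm.toCommSemiring (R : Type*) [inst : STComm R] : CommSemiring R :=
  { inst.toSemiring with mul_comm := STComm.mul_comm' }

namespace AdjAux

section NuOrder

variable {R : Type*} [STComm R]

lemma nu_idem' (a : R) : (a + a) + (a + a) = a + a := SupertropicalSemiring.nu_idem a

lemma nle_refl (a : R) : ST.nuLe a a := nu_idem' a

lemma nuEq_refl (a : R) : ST.nuEq a a := rfl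

lemma nle_of_nuEq {a b : R} (h : ST.nuEq a b) : ST.nuLe a b := by
  rw [ST.nuLe, h, ST.nuEq] at *; exact nu_idem' b

lemma nle_trans {a b c : R} (h : ST.nuLe a b) (h' : ST.nuLe b c) : ST.nuLe a c := by
  rw [ST.nuLe] at *
  calc (a+a) + (c+c) = (a+a) + ((b+b) + (c+c)) := by rw [h']
    _ = ((a+a) + (b+b)) + (c+c) := (add_assoc _ _ _).symm
    _ = (b+b) + (c+c) := by rw [h]
    _ = c + c := h'

lemma nle_antisymm {a b : R} (h : ST.nuLe a b) (h' : ST.nuLe b a) : ST.nuEq a b := by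
  rw [ST.nuLe] at *
  exact h'.symm.trans ((add_comm _ _).trans h)

lemma nle_congr_left {a b c : R} (h : ST.nuEq a b) (h' : ST.nuLe b c) : ST.nuLe a c :=
  nle_trans (nle_of_nuEq h) h'

lemma nle_congr_right {a b c : R} (h : ST.nuLe a b) (h' : ST.nuEq b c) : ST.nuLe a c :=
  nle_trans h (nle_of_nuEq h')

lemma nle_add_left (a b : R) : ST.nuLe a (a + b) := by
  rw [ST.nuLe]
  have : (a + b) + (a + b) = (a + a) + (b + b) := by ring
  rw [this, ← add_assoc, nu_idem' a]

lemma nle_sup {a b c : R} (h : ST.nuLe a c) (h' : ST.nuLe b c) : ST.nuLe (a + b) c := by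
  rw [ST.nuLe] at *
  have : (a + b) + (a + b) = (a + a) + (b + b) := by ring
  rw [this, add_assoc, h', h]

lemma nu_mul (a b : R) : (a * b) + (a * b) = (a + a) * (b + b) := by
  have : (a + a) * (b + b) = ((a*b) + (a*b)) + ((a*b) + (a*b)) := by ring
  rw [this, nu_idem']

lemma nle_mul {a b c d : R} (h : ST.nuLe a b) (h' : ST.nuLe c d) : ST.nuLe (a * c) (b * d) := by
  rw [ST.nuLe] at *
  rw [nu_mul, nu_mul]
  have hb : b + b = (a + a) + (b + b) := h.symm
  have hd : d + d = (c + c) + (d + d) := h'.symm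
  calc (a+a)*(c+c) + (b+b)*(d+d)
      = (a+a)*(c+c) + ((a+a)+(b+b))*((c+c)+(d+d)) := by rw [← hb, ← hd]
    _ = ((a+a)*(c+c) + (a+a)*(c+c)) + ((a+a)*(d+d) + (b+b)*(c+c) + (b+b)*(d+d)) := by ring
    _ = (a+a)*(c+c) + ((a+a)*(d+d) + (b+b)*(c+c) + (b+b)*(d+d)) := by
        rw [← nu_mul, nu_idem', nu_mul]
    _ = ((a+a)+(b+b))*((c+c)+(d+d)) := by ring
    _ = (b+b)*(d+d) := by rw [← hb, ← hd]

lemma nuEq_mul {a b c d : R} (h : ST.nuEq a b) (h' : ST.nuEq c d) : ST.nuEq (a * c) (b * d) := by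
  rw [ST.nuEq] at *
  rw [nu_mul, nu_mul, h, h']

lemma nle_total (a b : R) : ST.nuLe a b ∨ ST.nuLe b a := by
  by_cases h : a + a = b + b
  · exact Or.inl (nle_of_nuEq h)
  · have h2 : (a+a) + (a+a) ≠ (b+b) + (b+b) := by rw [nu_idem', nu_idem']; exact h
    rcases SupertropicalSemiring.add_cases h2 with h3 | h3
    · right; rw [ST.nuLe, add_comm]; exact h3
    · left; rw [ST.nuLe]; exact h3

lemma nle_pow {a b : R} (h : ST.nuLe a b) : ∀ t : ℕ, ST.nuLe (a ^ t) (b ^ t)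
  | 0 => by simpa using nle_refl (1 : R)
  | (t+1) => by
      rw [pow_succ, pow_succ]
      exact nle_mul (nle_pow h t) h

lemma nle_zero (c : R) : ST.nuLe 0 c := by simp [ST.nuLe]

lemma nle_sum {ι : Type*} {s : Finset ι} {f : ι → R} {c : R}
    (h : ∀ i ∈ s, ST.nuLe (f i) c) : ST.nuLe (∑ i ∈ s, f i) c := by
  classical
  induction s using Finset.induction with
  | empty => simpa using nle_zero c
  | @insert _ _ hx ih =>
      rw [Finset.sum_insert hx]
      exact nle_sup (h _ (Finset.mem_insert_self _ _))
        (ih fun i hi => h i (Finset.mem_insert_of_mem hi))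

lemma nle_le_sum {ι : Type*} {s : Finset ι} {f : ι → R} {i : ι} (hi : i ∈ s) :
    ST.nuLe (f i) (∑ j ∈ s, f j) := by
  classical
  rw [← Finset.add_sum_erase s f hi]
  exact nle_add_left _ _

lemma nle_prod {ι : Type*} {s : Finset ι} {f g : ι → R}
    (h : ∀ i ∈ s, ST.nuLe (f i) (g i)) : ST.nuLe (∏ i ∈ s, f i) (∏ i ∈ s, g i) := by
  classical
  induction s using Finset.induction with
  | empty => simpa using nle_refl (1 : R)
  | @insert _ _ hx ih =>
      rw [Finset.prod_insert hx, Finset.prod_insert hx]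
      exact nle_mul (h _ (Finset.mem_insert_self _ _))
        (ih fun i hi => h i (Finset.mem_insert_of_mem hi))

lemma freshman {ι : Type*} {s : Finset ι} (hs : s.Nonempty) (f : ι → R) (e : ℕ) :
    ST.nuEq ((∑ i ∈ s, f i) ^ e) (∑ i ∈ s, (f i) ^ e) := by
  classical
  apply nle_antisymm
  · induction e with
    | zero =>
        obtain ⟨a, ha⟩ := hs
        rw [pow_zero]
        have h0 : (1:R) = f a ^ 0 := (pow_zero _).symm
        rw [h0]
        exact nle_le_sum (f := fun i => (f i)^0) ha
    | succ e ih =>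
        rw [pow_succ]
        have h1 : ST.nuLe ((∑ i ∈ s, f i) ^ e * ∑ i ∈ s, f i)
            ((∑ i ∈ s, (f i) ^ e) * ∑ i ∈ s, f i) := nle_mul ih (nle_refl _)
        refine nle_trans h1 ?_
        rw [Finset.sum_mul]
        apply nle_sum
        intro a ha
        rw [Finset.mul_sum]
        apply nle_sum
        intro b hb
        rcases nle_total (f a) (f b) with h | h
        · have : ST.nuLe ((f a)^e * f b) ((f b)^e * f b) := nle_mul (nle_pow h e) (nle_refl _)
          refine nle_trans this ?_
          rw [← pow_succ]
          exact nle_le_sum (f := fun c => f c ^ (e+1)) hb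
        · have : ST.nuLe ((f a)^e * f b) ((f a)^e * f a) := nle_mul (nle_refl _) h
          refine nle_trans this ?_
          rw [← pow_succ]
          exact nle_le_sum (f := fun c => f c ^ (e+1)) ha
  · apply nle_sum
    intro a ha
    exact nle_pow (nle_le_sum ha) e

lemma nle_mul_prod_sum {ι κ : Type*} [DecidableEq ι] [Fintype κ] [Nonempty κ]
    (s : Finset ι) (f : ι → κ → R) (c C : R)
    (h : ∀ g : ι → κ, ST.nuLe (c * ∏ i ∈ s, f i (g i)) C) :
    ST.nuLe (c * ∏ i ∈ s, ∑ b, f i b) C := by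
  induction s using Finset.induction generalizing c with
  | empty => exact h (fun _ => Classical.arbitrary κ)
  | @insert a s' ha ih =>
      rw [Finset.prod_insert ha]
      have hrw : c * ((∑ b, f a b) * ∏ i ∈ s', ∑ b, f i b)
          = ∑ b, (c * f a b) * ∏ i ∈ s', ∑ b', f i b' := by
        rw [← mul_assoc, Finset.mul_sum, Finset.sum_mul]
      rw [hrw]
      apply nle_sum
      intro b _
      apply ih
      intro g
      have hg := h (Function.update g a b)
      rw [Finset.prod_insert ha, Function.update_self] at hg
      have hs' : ∏ i ∈ s', f i (Function.update g a b i) = ∏ i ∈ s', f i (g i) :=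
        Finset.prod_congr rfl (fun i hi =>
          by rw [Function.update_of_ne (fun hia => ha (by rw [← hia]; exact hi))])
      rw [hs'] at hg
      rw [mul_assoc]
      exact hg

end NuOrder

section Graphs

open Finset Equiv

variable {S : Type*} [CommSemiring S] {m : ℕ}

/-- product of matrix entries with multiplicities `D` -/
def mpg (B : Matrix (Fin m) (Fin m) S) (D : Fin m → Fin m → ℕ) : S :=
  ∏ x, ∏ y, B x y ^ D x y

def pmat (σ : Perm (Fin m)) : Fin m → Fin m → ℕ := fun x y => if σ x = y then 1 else 0

def apmat (σ : Perm (Fin m)) (j : Fin m) : Fin m → Fin m → ℕ :=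
  fun x y => if x ≠ j ∧ σ x = y then 1 else 0

def cellm (j i : Fin m) : Fin m → Fin m → ℕ := fun x y => if x = j ∧ y = i then 1 else 0

lemma mpg_congr {B : Matrix (Fin m) (Fin m) S} {D E : Fin m → Fin m → ℕ}
    (h : ∀ x y, D x y = E x y) : mpg B D = mpg B E := by
  unfold mpg; exact Finset.prod_congr rfl fun x _ => Finset.prod_congr rfl fun y _ => by rw [h]

lemma mpg_add (B : Matrix (Fin m) (Fin m) S) (D E : Fin m → Fin m → ℕ) :
    mpg B (D + E) = mpg B D * mpg B E := by
  unfold mpg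
  rw [← Finset.prod_mul_distrib]
  refine Finset.prod_congr rfl fun x _ => ?_
  rw [← Finset.prod_mul_distrib]
  exact Finset.prod_congr rfl fun y _ => by simp [pow_add]

lemma mpg_zero (B : Matrix (Fin m) (Fin m) S) : mpg B 0 = 1 := by simp [mpg]

lemma mpg_sum {ι : Type*} (B : Matrix (Fin m) (Fin m) S) (s : Finset ι)
    (E : ι → Fin m → Fin m → ℕ) :
    mpg B (∑ r ∈ s, E r) = ∏ r ∈ s, mpg B (E r) := by
  classical
  induction s using Finset.induction with
  | empty => simp [mpg_zero]
  | @insert _ _ hx ih => rw [Finset.sum_insert hx, Finset.prod_insert hx, mpg_add, ih]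

lemma mpg_smul (B : Matrix (Fin m) (Fin m) S) (c : ℕ) (E : Fin m → Fin m → ℕ) :
    mpg B (c • E) = mpg B E ^ c := by
  induction c with
  | zero => simp [mpg_zero]
  | succ c ih => rw [succ_nsmul, mpg_add, ih, pow_succ]

lemma mpg_pmat (B : Matrix (Fin m) (Fin m) S) (σ : Perm (Fin m)) :
    mpg B (pmat σ) = ∏ x, B x (σ x) := by
  unfold mpg pmat
  refine Finset.prod_congr rfl fun x _ => ?_
  rw [show (∏ y, B x y ^ (if σ x = y then 1 else 0)) = ∏ y, (if σ x = y then B x y else 1) from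
    Finset.prod_congr rfl fun y _ => by split_ifs <;> simp]
  rw [Finset.prod_ite_eq]
  simp

lemma mpg_apmat (B : Matrix (Fin m) (Fin m) S) (σ : Perm (Fin m)) (j : Fin m) :
    mpg B (apmat σ j) = ∏ x ∈ Finset.univ.erase j, B x (σ x) := by
  unfold mpg apmat
  have h1 : ∀ x : Fin m, (∏ y, B x y ^ (if x ≠ j ∧ σ x = y then 1 else 0))
      = if x = j then 1 else B x (σ x) := by
    intro x
    by_cases hx : x = j
    · simp [hx]
    · rw [show (∏ y, B x y ^ (if x ≠ j ∧ σ x = y then 1 else 0))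
          = ∏ y, (if σ x = y then B x y else 1) from
        Finset.prod_congr rfl fun y _ => by
          by_cases h : σ x = y <;> simp [h, hx]]
      rw [Finset.prod_ite_eq]
      simp [hx]
  rw [Finset.prod_congr rfl fun x _ => h1 x]
  rw [← Finset.prod_erase (f := fun x => if x = j then 1 else B x (σ x)) (a := j)
    Finset.univ (by simp)]
  exact Finset.prod_congr rfl fun x hx => by simp [(Finset.mem_erase.mp hx).1]

lemma per_eq (B : Matrix (Fin m) (Fin m) S) : ST.per B = ∑ σ : Perm (Fin m), mpg B (pmat σ) := by
  unfold ST.per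
  exact Finset.sum_congr rfl fun σ _ => by rw [List.prod_ofFn, mpg_pmat]

lemma rowsum_apmat (σ : Perm (Fin m)) (j x : Fin m) :
    ∑ y, apmat σ j x y = if x = j then 0 else 1 := by
  unfold apmat
  by_cases hx : x = j <;> simp [hx]

lemma colsum_apmat (σ : Perm (Fin m)) (j y : Fin m) :
    ∑ x, apmat σ j x y = if y = σ j then 0 else 1 := by
  unfold apmat
  have : ∀ x : Fin m, (if x ≠ j ∧ σ x = y then (1:ℕ) else 0)
      = if x = σ.symm y then (if y = σ j then 0 else 1) else 0 := by
    intro x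
    by_cases h1 : x = σ.symm y
    · subst h1
      by_cases h2 : y = σ j
      · have : σ.symm y = j := by rw [h2]; simp
        simp [h2, this]
      · have hne : σ.symm y ≠ j := fun hc => h2 (by rw [← hc]; simp)
        simp [hne, h2]
    · have : ¬ (σ x = y) := fun hc => h1 (by rw [← hc]; simp)
      simp [this, h1]
  rw [Finset.sum_congr rfl fun x _ => this x, Finset.sum_ite_eq']
  simp

lemma rowsum_cellm (j i x : Fin m) : ∑ y, cellm j i x y = if x = j then 1 else 0 := by
  unfold cellm
  by_cases hx : x = j <;> simp [hx]

lemma colsum_cellm (j i y : Fin m) : ∑ x, cellm j i x y = if y = i then 1 else 0 := by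
  unfold cellm
  by_cases hy : y = i <;> simp [hy]

lemma pmat_eq_apmat_add_cellm {ρ : Perm (Fin m)} {j i : Fin m} (h : ρ j = i) (x y : Fin m) :
    pmat ρ x y = apmat ρ j x y + cellm j i x y := by
  unfold pmat apmat cellm
  by_cases hx : x = j
  · subst hx
    rw [h]
    by_cases hy : y = i
    · subst hy; simp
    · have : ¬ (i = y) := fun hc => hy hc.symm
      simp [hy, this]
  · by_cases hy : ρ x = y <;> simp [hx, hy]

end Graphs

section ToPerm

open Equiv

variable {n : ℕ}

def toPerm (j i : Fin (n+1)) (e : Perm (Fin n)) : Perm (Fin (n+1)) :=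
  ((finSuccEquiv' j).trans e.optionCongr).trans (finSuccEquiv' i).symm

@[simp] lemma toPerm_at (j i : Fin (n+1)) (e : Perm (Fin n)) : toPerm j i e j = i := by
  simp [toPerm]

@[simp] lemma toPerm_succAbove (j i : Fin (n+1)) (e : Perm (Fin n)) (k : Fin n) :
    toPerm j i e (j.succAbove k) = i.succAbove (e k) := by
  simp [toPerm]

lemma toPerm_surj {j i : Fin (n+1)} (ρ : Perm (Fin (n+1))) (h : ρ j = i) :
    ∃ e : Perm (Fin n), toPerm j i e = ρ := by
  refine ⟨Equiv.removeNone (((finSuccEquiv' j).symm.trans ρ).trans (finSuccEquiv' i)), ?_⟩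
  set E := ((finSuccEquiv' j).symm.trans ρ).trans (finSuccEquiv' i) with hE
  apply Equiv.ext
  intro x
  by_cases hx : x = j
  · subst hx; simp [h]
  · obtain ⟨k, hk⟩ := Fin.exists_succAbove_eq hx
    subst hk
    rw [toPerm_succAbove]
    have hne : ρ (j.succAbove k) ≠ i := by
      intro hc
      exact (Fin.succAbove_ne j k) (ρ.injective (hc.trans h.symm))
    obtain ⟨w, hw⟩ := Fin.exists_succAbove_eq hne
    have hsome : E (some k) = some w := by
      simp only [hE, Equiv.trans_apply]
      rw [finSuccEquiv'_symm_some, ← hw, finSuccEquiv'_succAbove]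
    have := Equiv.removeNone_some E ⟨w, hsome⟩
    rw [hsome] at this
    rw [Option.some_inj] at this
    rw [this, ← hw]

end ToPerm

section AdjEq

open Finset Equiv

variable {S : Type*} [CommSemiring S] {n : ℕ}

lemma prod_erase_eq_succAbove {M : Type*} [CommMonoid M] (f : Fin (n+1) → M) (j : Fin (n+1)) :
    ∏ x ∈ Finset.univ.erase j, f x = ∏ k : Fin n, f (j.succAbove k) := by
  refine (Finset.prod_bij (i := fun (k : Fin n) (_ : k ∈ Finset.univ) => j.succAbove k)
    (fun k _ => ?_) (fun a _ b _ hab => ?_) (fun x hx => ?_) (fun k _ => rfl)).symm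
  · exact Finset.mem_erase.mpr ⟨Fin.succAbove_ne j k, Finset.mem_univ _⟩
  · exact Fin.succAbove_right_injective hab
  · obtain ⟨k, hk⟩ := Fin.exists_succAbove_eq (Finset.mem_erase.mp hx).1
    exact ⟨k, Finset.mem_univ _, hk⟩

lemma adj_eq (A : Matrix (Fin (n+1)) (Fin (n+1)) S) (i j : Fin (n+1)) :
    ST.adj A i j = ∑ e : Perm (Fin n), mpg A (apmat (toPerm j i e) j) := by
  unfold ST.adj
  rw [per_eq]
  refine Finset.sum_congr rfl fun e _ => ?_
  rw [mpg_pmat, mpg_apmat, prod_erase_eq_succAbove]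
  refine Finset.prod_congr rfl fun k _ => ?_
  rw [toPerm_succAbove]
  rfl

end AdjEq

section Birkhoff

open Finset Equiv

lemma birkhoff {m : ℕ} (K : ℕ) (D : Fin m → Fin m → ℕ)
    (hr : ∀ x, ∑ y, D x y = K) (hc : ∀ y, ∑ x, D x y = K) :
    ∃ c : Perm (Fin m) → ℕ, (∑ σ, c σ) = K ∧
      ∀ x y, D x y = ∑ σ, c σ * (if σ x = y then 1 else 0) := by
  induction K generalizing D with
  | zero =>
      refine ⟨fun _ => 0, by simp, fun x y => ?_⟩
      have h0 : D x y = 0 := by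
        have := hr x
        have hle : D x y ≤ ∑ y, D x y := Finset.single_le_sum (fun _ _ => Nat.zero_le _)
          (Finset.mem_univ y)
        omega
      simp [h0]
  | succ K ih =>
      classical
      set t : Fin m → Finset (Fin m) := fun x => Finset.univ.filter (fun y => 0 < D x y) with ht
      have hall : ∀ s : Finset (Fin m), s.card ≤ (s.biUnion t).card := by
        intro s
        have key : (K+1) * s.card ≤ (K+1) * (s.biUnion t).card := by
          calc (K+1) * s.card = ∑ _x ∈ s, (K+1) := by
                rw [Finset.sum_const, smul_eq_mul, mul_comm]
            _ = ∑ x ∈ s, ∑ y, D x y := Finset.sum_congr rfl fun x _ => (hr x).symm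
            _ = ∑ x ∈ s, ∑ y ∈ t x, D x y := by
                refine Finset.sum_congr rfl fun x _ => ?_
                rw [ht]
                exact (Finset.sum_filter_of_ne (fun y _ hy => Nat.pos_of_ne_zero hy)).symm
            _ ≤ ∑ x ∈ s, ∑ y ∈ s.biUnion t, D x y := by
                refine Finset.sum_le_sum fun x hx => ?_
                exact Finset.sum_le_sum_of_subset (Finset.subset_biUnion_of_mem t hx)
            _ = ∑ y ∈ s.biUnion t, ∑ x ∈ s, D x y := Finset.sum_comm
            _ ≤ ∑ y ∈ s.biUnion t, (K+1) := by
                refine Finset.sum_le_sum fun y _ => ?_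
                calc ∑ x ∈ s, D x y ≤ ∑ x, D x y :=
                      Finset.sum_le_sum_of_subset (Finset.subset_univ s)
                  _ = K+1 := hc y
            _ = (K+1) * (s.biUnion t).card := by
                rw [Finset.sum_const, smul_eq_mul, mul_comm]
        exact Nat.le_of_mul_le_mul_left key (Nat.succ_pos K)
      obtain ⟨f, finj, hf⟩ := (Finset.all_card_le_biUnion_card_iff_exists_injective t).mp hall
      set σ : Perm (Fin m) := Equiv.ofBijective f (Finite.injective_iff_bijective.mp finj)
        with hσdef
      have hσ : ∀ x, 0 < D x (σ x) := by
        intro x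
        have := hf x
        rw [ht] at this
        exact (Finset.mem_filter.mp this).2
      have bound : ∀ x y, (if σ x = y then 1 else 0) ≤ D x y := by
        intro x y
        by_cases h : σ x = y
        · rw [if_pos h, ← h]; exact hσ x
        · simp [h]
      set D' : Fin m → Fin m → ℕ := fun x y => D x y - (if σ x = y then 1 else 0) with hD'
      have hDsplit : ∀ x y, D x y = D' x y + (if σ x = y then 1 else 0) := by
        intro x y
        rw [hD']
        exact (Nat.sub_add_cancel (bound x y)).symm
      have hr' : ∀ x, ∑ y, D' x y = K := by
        intro x
        have h1 : ∑ y, D x y = (∑ y, D' x y) + ∑ y, (if σ x = y then 1 else 0) := by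
          rw [← Finset.sum_add_distrib]
          exact Finset.sum_congr rfl fun y _ => hDsplit x y
        have h2 : ∑ y, (if σ x = y then (1:ℕ) else 0) = 1 := by
          rw [Finset.sum_ite_eq]
          simp
        have := hr x
        omega
      have hc' : ∀ y, ∑ x, D' x y = K := by
        intro y
        have h1 : ∑ x, D x y = (∑ x, D' x y) + ∑ x, (if σ x = y then 1 else 0) := by
          rw [← Finset.sum_add_distrib]
          exact Finset.sum_congr rfl fun x _ => hDsplit x y
        have h2 : ∑ x, (if σ x = y then (1:ℕ) else 0) = 1 := by
          have : ∀ x : Fin m, (if σ x = y then (1:ℕ) else 0) = if x = σ.symm y then 1 else 0 := by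
            intro x
            by_cases h : σ x = y
            · rw [if_pos h, if_pos (by rw [← h]; simp)]
            · rw [if_neg h, if_neg (fun hc => h (by rw [hc]; simp))]
          rw [Finset.sum_congr rfl fun x _ => this x, Finset.sum_ite_eq']
          simp
        have := hc y
        omega
      obtain ⟨c', hsum', hdec'⟩ := ih D' hr' hc'
      refine ⟨fun τ => c' τ + (if τ = σ then 1 else 0), ?_, ?_⟩
      · rw [Finset.sum_add_distrib, hsum', Finset.sum_ite_eq']
        simp
      · intro x y
        have h3 : ∑ τ : Perm (Fin m), (if τ = σ then (1:ℕ) else 0) * (if τ x = y then 1 else 0)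
            = (if σ x = y then 1 else 0) := by
          have : ∀ τ : Perm (Fin m), (if τ = σ then (1:ℕ) else 0) * (if τ x = y then 1 else 0)
              = if τ = σ then (if σ x = y then 1 else 0) else 0 := by
            intro τ
            by_cases h : τ = σ
            · subst h; simp
            · simp [h]
          rw [Finset.sum_congr rfl fun τ _ => this τ, Finset.sum_ite_eq']
          simp
        calc D x y = D' x y + (if σ x = y then 1 else 0) := hDsplit x y
          _ = (∑ τ : Perm (Fin m), c' τ * (if τ x = y then 1 else 0))
              + ∑ τ : Perm (Fin m), (if τ = σ then (1:ℕ) else 0) * (if τ x = y then 1 else 0) := by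
            rw [hdec' x y, h3]
          _ = ∑ τ : Perm (Fin m), (c' τ + (if τ = σ then 1 else 0)) * (if τ x = y then 1 else 0) := by
            rw [← Finset.sum_add_distrib]
            exact Finset.sum_congr rfl fun τ _ => by rw [add_mul]

end Birkhoff

section CountHelpers

open Finset

lemma fin_pos {n : ℕ} {x y : Fin (n+1)} (h : x ≠ y) : 1 ≤ n := by
  cases n with
  | zero => exact absurd (Fin.ext (by omega)) h
  | succ n => omega

lemma sum_erase_ite {n : ℕ} (l t : Fin (n+1)) :
    ∑ r ∈ Finset.univ.erase l, (if r = t then (0:ℕ) else 1) = if t = l then n else n - 1 := by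
  classical
  have hcard : (Finset.univ.erase l).card = n := by
    rw [Finset.card_erase_of_mem (Finset.mem_univ l), Finset.card_univ, Fintype.card_fin]
    omega
  have h1 : (∑ r ∈ Finset.univ.erase l, (if r = t then (0:ℕ) else 1))
      + (∑ r ∈ Finset.univ.erase l, (if r = t then (1:ℕ) else 0)) = n := by
    rw [← Finset.sum_add_distrib]
    have : ∀ r : Fin (n+1), ((if r = t then (0:ℕ) else 1) + (if r = t then (1:ℕ) else 0)) = 1 :=
      fun r => by split_ifs <;> rfl
    rw [Finset.sum_congr rfl fun r _ => this r, Finset.sum_const, smul_eq_mul, mul_one, hcard]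
  have h2 : ∑ r ∈ Finset.univ.erase l, (if r = t then (1:ℕ) else 0) = if t = l then 0 else 1 := by
    rw [Finset.sum_ite_eq']
    by_cases h : t = l
    · simp [h]
    · simp [Finset.mem_erase, h]
  rw [h2] at h1
  split_ifs at h1 ⊢ <;> omega

end CountHelpers

section MainLemmas

open Finset Equiv

variable {R : Type*} [STComm R] {n : ℕ}

lemma pmat_le_per {m : ℕ} (B : Matrix (Fin m) (Fin m) R) (σ : Perm (Fin m)) :
    ST.nuLe (mpg B (pmat σ)) (ST.per B) := by
  rw [per_eq]
  exact nle_le_sum (f := fun τ => mpg B (pmat τ)) (Finset.mem_univ σ)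

lemma apmat_le_adj (B : Matrix (Fin (n+1)) (Fin (n+1)) R) (ρ : Perm (Fin (n+1)))
    (j : Fin (n+1)) :
    ST.nuLe (mpg B (apmat ρ j)) (ST.adj B (ρ j) j) := by
  obtain ⟨e, he⟩ := toPerm_surj ρ rfl
  have hrw : mpg B (apmat ρ j) = mpg B (apmat (toPerm j (ρ j) e) j) := by rw [he]
  rw [adj_eq B (ρ j) j, hrw]
  exact nle_le_sum (f := fun e' => mpg B (apmat (toPerm j (ρ j) e') j)) (Finset.mem_univ e)

lemma mpg_le_rhs (B : Matrix (Fin (n+1)) (Fin (n+1)) R) (i j : Fin (n+1))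
    (D : Fin (n+1) → Fin (n+1) → ℕ)
    (hr : ∀ x, ∑ y, D x y = if x = j then n else n+1)
    (hc : ∀ y, ∑ x, D x y = if y = i then n else n+1) :
    ST.nuLe (mpg B D) (ST.per B ^ n * ST.adj B i j) := by
  classical
  have hrt : ∀ x, ∑ y, (D x y + cellm j i x y) = n+1 := by
    intro x
    rw [Finset.sum_add_distrib, hr x, rowsum_cellm]
    split_ifs <;> omega
  have hct : ∀ y, ∑ x, (D x y + cellm j i x y) = n+1 := by
    intro y
    rw [Finset.sum_add_distrib, hc y, colsum_cellm]
    split_ifs <;> omega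
  obtain ⟨c, hcs, hdec⟩ := birkhoff (n+1) (fun x y => D x y + cellm j i x y) hrt hct
  have hji : (∑ σ : Perm (Fin (n+1)), c σ * (if σ j = i then 1 else 0)) ≠ 0 := by
    have hd : D j i + cellm j i j i
        = ∑ σ : Perm (Fin (n+1)), c σ * (if σ j = i then 1 else 0) := hdec j i
    have hcell : cellm j i j i = 1 := by simp [cellm]
    omega
  obtain ⟨ρ, -, hρ0⟩ := Finset.exists_ne_zero_of_sum_ne_zero hji
  have hρji : ρ j = i := by
    by_contra hcon
    simp [hcon] at hρ0
  have hcρ : 1 ≤ c ρ := by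
    rcases Nat.eq_zero_or_pos (c ρ) with h | h
    · rw [h] at hρ0; simp at hρ0
    · exact h
  set c' : Perm (Fin (n+1)) → ℕ := fun τ => if τ = ρ then c τ - 1 else c τ with hc'def
  have h1 : ∀ τ, c' τ + (if τ = ρ then 1 else 0) = c τ := by
    intro τ
    rw [hc'def]
    by_cases h : τ = ρ
    · subst h; simp; omega
    · simp [h]
  have hc'sum : ∑ τ, c' τ = n := by
    have h2 : (∑ τ, c' τ) + (∑ τ : Perm (Fin (n+1)), if τ = ρ then (1:ℕ) else 0) = n+1 := by
      rw [← Finset.sum_add_distrib, Finset.sum_congr rfl fun τ _ => h1 τ, hcs]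
    rw [Finset.sum_ite_eq'] at h2
    simp at h2
    omega
  have hDdec : ∀ x y, D x y = (∑ τ : Perm (Fin (n+1)), c' τ * pmat τ x y) + apmat ρ j x y := by
    intro x y
    have hd : D x y + cellm j i x y = ∑ τ : Perm (Fin (n+1)), c τ * pmat τ x y := hdec x y
    have hsplit : ∑ τ : Perm (Fin (n+1)), c τ * pmat τ x y
        = (∑ τ : Perm (Fin (n+1)), c' τ * pmat τ x y)
          + ∑ τ : Perm (Fin (n+1)), (if τ = ρ then (1:ℕ) else 0) * pmat τ x y := by
      rw [← Finset.sum_add_distrib]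
      refine Finset.sum_congr rfl fun τ _ => ?_
      rw [← add_mul, h1]
    have hind : ∑ τ : Perm (Fin (n+1)), (if τ = ρ then (1:ℕ) else 0) * pmat τ x y
        = pmat ρ x y := by
      have hterm : ∀ τ : Perm (Fin (n+1)), (if τ = ρ then (1:ℕ) else 0) * pmat τ x y
          = if τ = ρ then pmat ρ x y else 0 := by
        intro τ
        by_cases h : τ = ρ
        · subst h; simp
        · simp [h]
      rw [Finset.sum_congr rfl fun τ _ => hterm τ, Finset.sum_ite_eq']
      simp
    have hcell := pmat_eq_apmat_add_cellm hρji x y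
    omega
  have hfun : D = (∑ τ : Perm (Fin (n+1)), c' τ • pmat τ) + apmat ρ j := by
    funext x y
    simp only [Pi.add_apply, Finset.sum_apply, Pi.smul_apply, smul_eq_mul]
    exact hDdec x y
  rw [hfun, mpg_add, mpg_sum]
  have hb1 : ST.nuLe (∏ τ : Perm (Fin (n+1)), mpg B (c' τ • pmat τ)) (ST.per B ^ n) := by
    have hstep : ∀ τ ∈ Finset.univ, ST.nuLe (mpg B (c' τ • pmat τ)) (ST.per B ^ c' τ) := by
      intro τ _
      rw [mpg_smul]
      exact nle_pow (pmat_le_per B τ) (c' τ)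
    refine nle_congr_right (nle_prod hstep) ?_
    rw [Finset.prod_pow_eq_pow_sum, hc'sum]
    exact nuEq_refl _
  have hb2 : ST.nuLe (mpg B (apmat ρ j)) (ST.adj B i j) := by
    have h := apmat_le_adj B ρ j
    rw [hρji] at h
    exact h
  exact nle_mul hb1 hb2

lemma graph_id (σ : Perm (Fin (n+1))) (i x y : Fin (n+1)) :
    apmat σ (σ.symm i) x y + ∑ r ∈ Finset.univ.erase i, apmat σ (σ.symm r) x y
      = n * pmat σ x y := by
  classical
  unfold apmat pmat
  by_cases hσ : σ x = y
  · have hterm : ∀ r : Fin (n+1), (if x ≠ σ.symm r ∧ σ x = y then (1:ℕ) else 0)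
        = if r = σ x then 0 else 1 := by
      intro r
      by_cases hr : r = σ x
      · subst hr
        rw [if_neg (fun hca => hca.1 (Equiv.symm_apply_apply σ x).symm), if_pos rfl]
      · have hxr : x ≠ σ.symm r := fun hc => hr (by rw [hc]; simp)
        rw [if_pos ⟨hxr, hσ⟩, if_neg hr]
    rw [Finset.sum_congr rfl fun r _ => hterm r, sum_erase_ite]
    by_cases hx : x = σ.symm i
    · have hi : σ x = i := by rw [hx]; simp
      rw [if_neg (by simp [hx]), if_pos hi, if_pos hσ]
      omega
    · have hi : σ x ≠ i := fun hc => hx (by rw [← hc]; simp)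
      have hn : 1 ≤ n := fin_pos hi
      rw [if_pos ⟨hx, hσ⟩, if_neg hi, if_pos hσ]
      omega
  · simp [hσ]

theorem master (A : Matrix (Fin (n+1)) (Fin (n+1)) R) (i j : Fin (n+1)) :
    ST.nuEq ((ST.adj A * ST.adj (ST.adj A) * ST.adj A) i j) (ST.per A ^ n * ST.adj A i j) := by
  classical
  apply nle_antisymm
  · -- LHS ≤ RHS
    rw [Matrix.mul_apply]
    apply nle_sum
    intro l _
    rw [Matrix.mul_apply, Finset.sum_mul]
    apply nle_sum
    intro k _
    rw [adj_eq A i k, Finset.sum_mul, Finset.sum_mul]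
    apply nle_sum
    intro a _
    rw [adj_eq A l j, Finset.mul_sum]
    apply nle_sum
    intro cg _
    rw [adj_eq (ST.adj A) k l, Finset.mul_sum, Finset.sum_mul]
    apply nle_sum
    intro b _
    rw [mpg_apmat (ST.adj A) (toPerm l k b) l]
    rw [Finset.prod_congr rfl fun x _ => adj_eq A x ((toPerm l k b) x)]
    rw [mul_right_comm]
    apply nle_mul_prod_sum (f := fun x e =>
      mpg A (apmat (toPerm ((toPerm l k b) x) x e) ((toPerm l k b) x)))
    intro g
    rw [← mpg_sum A (Finset.univ.erase l)
      (fun x => apmat (toPerm ((toPerm l k b) x) x (g x)) ((toPerm l k b) x)),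
      ← mpg_add, ← mpg_add]
    apply mpg_le_rhs
    · -- row sums
      intro x
      simp only [Pi.add_apply, Finset.sum_apply]
      rw [Finset.sum_add_distrib, Finset.sum_add_distrib, rowsum_apmat, rowsum_apmat,
        Finset.sum_comm]
      rw [Finset.sum_congr rfl fun r _ =>
        rowsum_apmat (toPerm ((toPerm l k b) r) r (g r)) ((toPerm l k b) r) x]
      have hcond : ∀ r : Fin (n+1), (if x = (toPerm l k b) r then (0:ℕ) else 1)
          = if r = (toPerm l k b).symm x then 0 else 1 := by
        intro r
        by_cases h : x = (toPerm l k b) r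
        · rw [if_pos h, if_pos (by rw [h]; simp)]
        · rw [if_neg h, if_neg (fun hc => h (by rw [hc]; simp))]
      rw [Finset.sum_congr rfl fun r _ => hcond r, sum_erase_ite]
      have hiff : ((toPerm l k b).symm x = l) ↔ x = k := by
        rw [Equiv.symm_apply_eq, toPerm_at]
      rw [if_congr hiff rfl rfl]
      by_cases h1 : x = k
      · rw [if_pos h1, if_pos h1]
        by_cases h2 : x = j
        · rw [if_pos h2, if_pos h2]; omega
        · rw [if_neg h2, if_neg h2]; omega
      · have hn := fin_pos h1
        rw [if_neg h1, if_neg h1]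
        by_cases h2 : x = j
        · rw [if_pos h2, if_pos h2]; omega
        · rw [if_neg h2, if_neg h2]; omega
    · -- column sums
      intro y
      simp only [Pi.add_apply, Finset.sum_apply]
      rw [Finset.sum_add_distrib, Finset.sum_add_distrib, colsum_apmat, colsum_apmat,
        Finset.sum_comm]
      rw [Finset.sum_congr rfl fun r _ =>
        colsum_apmat (toPerm ((toPerm l k b) r) r (g r)) ((toPerm l k b) r) y]
      simp only [toPerm_at]
      have hcond : ∀ r : Fin (n+1), (if y = r then (0:ℕ) else 1) = if r = y then 0 else 1 := by
        intro r
        by_cases h : y = r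
        · rw [if_pos h, if_pos h.symm]
        · rw [if_neg h, if_neg (fun hc => h hc.symm)]
      rw [Finset.sum_congr rfl fun r _ => hcond r, sum_erase_ite]
      by_cases h2 : y = l
      · rw [if_pos h2, if_pos h2]
        by_cases h1 : y = i
        · rw [if_pos h1, if_pos h1]; omega
        · rw [if_neg h1, if_neg h1]; omega
      · have hn := fin_pos h2
        rw [if_neg h2, if_neg h2]
        by_cases h1 : y = i
        · rw [if_pos h1, if_pos h1]; omega
        · rw [if_neg h1, if_neg h1]; omega
  · -- RHS ≤ LHS
    have hper : ST.nuEq (ST.per A ^ n) (∑ σ : Perm (Fin (n+1)), mpg A (pmat σ) ^ n) := by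
      rw [per_eq]
      exact freshman Finset.univ_nonempty (fun σ => mpg A (pmat σ)) n
    refine nle_congr_left (nuEq_mul hper (nuEq_refl (ST.adj A i j))) ?_
    rw [Finset.sum_mul]
    apply nle_sum
    intro σ _
    rw [adj_eq A i j, Finset.mul_sum]
    apply nle_sum
    intro a _
    have hgraph : mpg A (pmat σ) ^ n
        = mpg A (apmat σ (σ.symm i)) * ∏ x ∈ Finset.univ.erase i, mpg A (apmat σ (σ.symm x)) := by
      rw [← mpg_smul, ← mpg_sum, ← mpg_add]
      apply mpg_congr
      intro x y
      have hg := graph_id σ i x y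
      simp only [Pi.smul_apply, smul_eq_mul, Pi.add_apply, Finset.sum_apply]
      exact hg.symm
    have hσk : σ (σ.symm i) = i := Equiv.apply_symm_apply σ i
    have hb1 : ST.nuLe (mpg A (apmat σ (σ.symm i))) (ST.adj A i (σ.symm i)) := by
      have h := apmat_le_adj A σ (σ.symm i)
      rw [hσk] at h
      exact h
    have hb2 : ST.nuLe (∏ x ∈ Finset.univ.erase i, mpg A (apmat σ (σ.symm x)))
        (ST.adj (ST.adj A) (σ.symm i) i) := by
      have step1 : ST.nuLe (∏ x ∈ Finset.univ.erase i, mpg A (apmat σ (σ.symm x)))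
          (∏ x ∈ Finset.univ.erase i, ST.adj A x (σ.symm x)) := by
        apply nle_prod
        intro x _
        have h := apmat_le_adj A σ (σ.symm x)
        rw [Equiv.apply_symm_apply] at h
        exact h
      refine nle_trans step1 ?_
      rw [← mpg_apmat (ST.adj A) σ.symm i]
      exact apmat_le_adj (ST.adj A) σ.symm i
    have hb3 : ST.nuLe (mpg A (apmat (toPerm j i a) j)) (ST.adj A i j) := by
      rw [adj_eq A i j]
      exact nle_le_sum (f := fun e => mpg A (apmat (toPerm j i e) j)) (Finset.mem_univ a)
    rw [hgraph]
    have hT : ST.nuLe ((mpg A (apmat σ (σ.symm i))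
          * ∏ x ∈ Finset.univ.erase i, mpg A (apmat σ (σ.symm x)))
          * mpg A (apmat (toPerm j i a) j))
        ((ST.adj A i (σ.symm i) * ST.adj (ST.adj A) (σ.symm i) i) * ST.adj A i j) :=
      nle_mul (nle_mul hb1 hb2) hb3
    refine nle_trans hT ?_
    rw [Matrix.mul_apply]
    have hterm : ST.nuLe (ST.adj A i (σ.symm i) * ST.adj (ST.adj A) (σ.symm i) i)
        ((ST.adj A * ST.adj (ST.adj A)) i i) := by
      rw [Matrix.mul_apply]
      exact nle_le_sum (f := fun k' => ST.adj A i k' * ST.adj (ST.adj A) k' i)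
        (Finset.mem_univ (σ.symm i))
    refine nle_trans (nle_mul hterm (nle_refl (ST.adj A i j))) ?_
    exact nle_le_sum (f := fun l => (ST.adj A * ST.adj (ST.adj A)) i l * ST.adj A l j)
      (Finset.mem_univ i)

end MainLemmas

end AdjAux

/-- `adj A · adj (adj A) · adj A ≅_ν |A|^{n-1} · adj A`
entrywise, for an `(n+1) × (n+1)` matrix `A`. -/
theorem adj_triple_nu_eq {R : Type*} [SupertropicalSemiring R]
    (hcomm : ∀ a b : R, a * b = b * a) {n : ℕ}
    (A : Matrix (Fin (n + 1)) (Fin (n + 1)) R) :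
    ∀ i j, ST.nuEq ((ST.adj A * ST.adj (ST.adj A) * ST.adj A) i j)
      (ST.per A ^ n * ST.adj A i j) := by
  letI : STComm R := { ‹SupertropicalSemiring R› with mul_comm' := hcomm }
  intro i j
  exact AdjAux.master A i j
end
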